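/- arXiv:1602.01143 — 5 statements merged into one kernel-verified Lean document; each statement's English description precedes it below -/
import Mathlib

section
/- If α is a Puiseux series of index n (the smallest natural number n with α ∈ ℂ[[x^{1/n}]]) and ε₁, ε₂ are distinct n-th roots of unity, then ε₁ * α ≠ ε₂ * α. -/
/-!
STATEMENT 2. Puiseux series modelled as coefficient functions `ℚ → ℂ`.
The index of `α` is the smallest `n ∈ ℕ₊` with `α ∈ ℂ[[x^{1/n}]]`.
For an `n`-th root of unity `ε`, `ε * α` multiplies the coefficient of
`x^{i/n}` by `ε^i`.  Distinct `n`-th roots of unity give distinct series.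
-/

abbrev PSer : Type := ℚ → ℂ

/-- Support of `φ` is contained in `(1/m)·ℕ`, i.e. `φ ∈ ℂ[[x^{1/m}]]`. -/
def hasDen (m : ℕ) (φ : PSer) : Prop := ∀ q : ℚ, φ q ≠ 0 → ∃ i : ℕ, q = (i : ℚ) / m

/-- `n` is the index of `φ`: the smallest positive `m` with `φ ∈ ℂ[[x^{1/m}]]`. -/
def hasIndex (n : ℕ) (φ : PSer) : Prop :=
  0 < n ∧ hasDen n φ ∧ ∀ m : ℕ, 0 < m → m < n → ¬ hasDen m φ

/-- The star operation: `ε * (Σ aᵢ x^{i/n}) = Σ aᵢ ε^i x^{i/n}`. -/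
noncomputable def star (n : ℕ) (ε : ℂ) (φ : PSer) : PSer :=
  fun q => ε ^ (q * n).num.toNat * φ q

/-! If `ε₁ * α = ε₂ * α`, then `ε₁ ^ i = ε₂ ^ i` for every exponent `i` with `x^{i/n}` in the
support of `α`, so the order `r` of `ε₁ / ε₂` divides all these `i`. Since `r ∣ n` and `r ≠ 1`,
`α` already lies in `ℂ[[x^{r/n}]]`, contradicting minimality of the index. -/

theorem pow_eq_pow_iff_orderOf_div_dvd {G : Type*} [CommGroupWithZero G] {a b : G} (hb : b ≠ 0)
    (i : ℕ) : a ^ i = b ^ i ↔ orderOf (a / b) ∣ i := by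
  rw [orderOf_dvd_iff_pow_eq_one, div_pow, div_eq_one_iff_eq (pow_ne_zero i hb)]

theorem star_natCast_div (n i : ℕ) (hn : n ≠ 0) (ε : ℂ) (φ : PSer) :
    _root_.star n ε φ (i / n) = ε ^ i * φ (i / n) := by
  simp [_root_.star, hn]

theorem hasDen_of_hasDen_mul {d m : ℕ} {φ : PSer} (h : hasDen (d * m) φ)
    (hsupp : ∀ i : ℕ, φ (i / (d * m : ℕ)) ≠ 0 → d ∣ i) : hasDen m φ := by
  intro q hq
  obtain ⟨i, rfl⟩ := h q hq
  obtain ⟨j, rfl⟩ := hsupp i hq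
  rcases eq_or_ne d 0 with rfl | hd
  · exact ⟨0, by simp⟩
  · exact ⟨j, by push_cast; rw [mul_div_mul_left _ _ (Nat.cast_ne_zero.mpr hd)]⟩

theorem stmt2 (n : ℕ) (α : PSer) (hα : hasIndex n α)
    (ε₁ ε₂ : ℂ) (h₁ : ε₁ ^ n = 1) (h₂ : ε₂ ^ n = 1) (hne : ε₁ ≠ ε₂) :
    star n ε₁ α ≠ star n ε₂ α := by
  obtain ⟨hn, hden, hmin⟩ := hα
  intro heq
  have hε₂ : ε₂ ≠ 0 := by rintro rfl; simp [hn.ne'] at h₂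
  set r := orderOf (ε₁ / ε₂)
  have hsupp : ∀ i : ℕ, α (i / n) ≠ 0 → r ∣ i := fun i hi ↦
    (pow_eq_pow_iff_orderOf_div_dvd hε₂ i).mp <| mul_right_cancel₀ hi <| by
      simpa only [star_natCast_div n i hn.ne'] using congrFun heq (i / n)
  have hr1 : r ≠ 1 := fun h ↦ hne <| (div_eq_one_iff_eq hε₂).mp (orderOf_eq_one_iff.mp h)
  obtain ⟨m, rfl⟩ : r ∣ n := (pow_eq_pow_iff_orderOf_div_dvd hε₂ n).mp (h₁.trans h₂.symm)
  have hm : 0 < m := Nat.pos_of_mul_pos_left hn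
  have hr : 1 < r := by have := Nat.pos_of_mul_pos_right hn; omega
  exact hmin m hm (lt_mul_left hm hr) (hasDen_of_hasDen_mul hden hsupp)
end

section
/- Let α = Σᵢ aᵢ x^{i/n} be a Puiseux series of positive order and index n, with associated characteristic data: e₀ = b₀ = n, b_{k+1} = min{ i : i ≢ 0 (mod e_k) and aᵢ ≠ 0 } when e_k ≠ 1, and e_k = gcd(e_{k−1}, b_k). Then for every ε ∈ U_{e_{k−1}} \ U_{e_k}, the contact order O(α, ε * α) equals b_k / n. -/
def contGe (φ ψ : PSer) (r : ℚ) : Prop := ∀ q : ℚ, q < r → φ q = ψ q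

/-- `O(φ,ψ) = r`. -/
def contEq (φ ψ : PSer) (r : ℚ) : Prop := contGe φ ψ r ∧ φ r ≠ ψ r

/-- `φ` has positive order. -/
def posOrder (φ : PSer) : Prop := ∀ q : ℚ, q ≤ 0 → φ q = 0

theorem star_apply_natCast_div {n : ℕ} (hn : n ≠ 0) (ε : ℂ) (φ : PSer) (i : ℕ) :
    star n ε φ ((i : ℚ) / n) = ε ^ i * φ ((i : ℚ) / n) := by
  have hcancel : (i : ℚ) / n * n = i := div_mul_cancel₀ _ (Nat.cast_ne_zero.mpr hn)
  show ε ^ ((i : ℚ) / n * n).num.toNat * _ = _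
  rw [hcancel, Rat.num_natCast, Int.toNat_natCast]

theorem contGe_star {n m b : ℕ} {ε : ℂ} {φ : PSer} (hn : n ≠ 0) (hden : hasDen n φ)
    (hε : ε ^ m = 1) (hdvd : ∀ i < b, φ ((i : ℚ) / n) ≠ 0 → m ∣ i) :
    contGe φ (star n ε φ) ((b : ℚ) / n) := by
  intro q hq
  by_cases hq0 : φ q = 0
  · simp [_root_.star, hq0]
  obtain ⟨i, rfl⟩ := hden q hq0
  have hib : i < b := by
    have hn' : (0 : ℚ) < n := by exact_mod_cast Nat.pos_of_ne_zero hn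
    exact_mod_cast (div_lt_div_iff_of_pos_right hn').mp hq
  obtain ⟨t, rfl⟩ := hdvd i hib hq0
  rw [star_apply_natCast_div hn, pow_mul, hε, one_pow, one_mul]

theorem star_apply_ne_self {n b : ℕ} {ε : ℂ} {φ : PSer} (hn : n ≠ 0)
    (hε : ε ^ b ≠ 1) (hφ : φ ((b : ℚ) / n) ≠ 0) :
    φ ((b : ℚ) / n) ≠ star n ε φ ((b : ℚ) / n) := by
  rw [star_apply_natCast_div hn]
  intro h
  exact hε (mul_right_cancel₀ hφ (by rw [one_mul]; exact h)).symm

theorem stmt3_general (n : ℕ) (α : PSer) (hα : hasIndex n α)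
    (b e : ℕ → ℕ)
    (hbmin : ∀ k : ℕ, e k ≠ 1 →
      IsLeast {i : ℕ | ¬ (e k ∣ i) ∧ α ((i : ℚ) / n) ≠ 0} (b (k + 1)))
    (hgcd : ∀ k : ℕ, e (k + 1) = Nat.gcd (e k) (b (k + 1)))
    (k : ℕ) (hek : e k ≠ 1)
    (ε : ℂ) (hε : ε ^ (e k) = 1) (hε' : ε ^ (e (k + 1)) ≠ 1) :
    contEq α (star n ε α) ((b (k + 1) : ℚ) / n) := by
  obtain ⟨hn, hden, -⟩ := hα
  obtain ⟨⟨-, hαb⟩, hleast⟩ := hbmin k hek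
  have hεb : ε ^ b (k + 1) ≠ 1 := fun h ↦ hε' (by rw [hgcd k]; exact pow_gcd_eq_one.mpr ⟨hε, h⟩)
  have hdvd : ∀ i < b (k + 1), α ((i : ℚ) / n) ≠ 0 → e k ∣ i := fun i hi hαi ↦
    not_not.mp fun hndvd ↦ (hleast ⟨hndvd, hαi⟩).not_gt hi
  exact ⟨contGe_star hn.ne' hden hε hdvd, star_apply_ne_self hn.ne' hεb hαb⟩

theorem stmt3 (n : ℕ) (α : PSer) (hα : hasIndex n α) (hpos : posOrder α)
    (b e : ℕ → ℕ) (hb0 : b 0 = n) (he0 : e 0 = n)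
    (hbmin : ∀ k : ℕ, e k ≠ 1 →
      IsLeast {i : ℕ | ¬ (e k ∣ i) ∧ α ((i : ℚ) / n) ≠ 0} (b (k + 1)))
    (hgcd : ∀ k : ℕ, e (k + 1) = Nat.gcd (e k) (b (k + 1)))
    (k : ℕ) (hek : e k ≠ 1)
    (ε : ℂ) (hε : ε ^ (e k) = 1) (hε' : ε ^ (e (k + 1)) ≠ 1) :
    contEq α (star n ε α) ((b (k + 1) : ℚ) / n) :=
  stmt3_general n α hα b e hbmin hgcd k hek ε hε hε'
end

section
/- Let F(t) = C·t^a·(t^n−1)^b·∏_{i=1}^{d}(t^n−c_i) be a real polynomial of positive degree, where a, b, d are nonnegative integers, C ≠ 0, and c₁,…,c_d are pairwise distinct real numbers in the open interval (0,1). Then the derivative F'(t) = C'·t^{a'}·(t^n−1)^{b'}·∏_{i=1}^{d'}(t^n−c'_i) for some C' ≠ 0, nonnegative integers a', b', d', and pairwise distinct c'_i ∈ (0,1). Moreover: if a > 0 then a' = a−1; if a = 0 then a' = n−1; if b > 0 then b' = b−1; if b = 0 then b' = 0. -/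
/-!
Write `F = K tᵃ P(tⁿ)` with `P = (X - 1)ᵇ ∏ (X - cᵢ)`. Then `F' = K tᵃ⁻¹ Q(tⁿ)` with
`Q = aP + nXP'` if `a > 0`, and `F' = K tⁿ⁻¹ Q(tⁿ)` with `Q = nP'` if `a = 0`; in both cases
`(X - 1)ᵇ⁻¹ ∣ Q`. The roots of `F` in `[0,1]` are `0` (if `a > 0`), the `cᵢ^(1/n)` and `1`
(if `b > 0`); by Rolle's theorem a root of `F'` lies strictly between any two consecutive ones,
and `t ↦ tⁿ` sends these to distinct roots of `Q` in `(0,1)`. Together with the root `1` of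
multiplicity `b - 1` they are as many as `deg Q`, so `Q` splits as required.
-/

open Polynomial Set

namespace Polynomial

theorem natDegree_X_mul_derivative_le {R : Type*} [Semiring R] (p : R[X]) :
    (X * derivative p).natDegree ≤ p.natDegree := by
  rcases eq_or_ne p.natDegree 0 with h | h
  · simp [derivative_of_natDegree_zero h]
  · have := natDegree_derivative_le p
    have := natDegree_X_le (R := R)
    exact natDegree_mul_le.trans (by omega)

theorem natDegree_X_sub_C_pow_mul_prod {R ι : Type*} [CommRing R] [Nontrivial R] (r : R)
    (b : ℕ) (s : Finset ι) (c : ι → R) :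
    ((X - C r) ^ b * ∏ i ∈ s, (X - C (c i))).natDegree = b + s.card := by
  rw [((monic_X_sub_C r).pow b).natDegree_mul (monic_prod_of_monic _ _ fun i _ => monic_X_sub_C _),
    natDegree_prod_of_monic _ _ fun i _ => monic_X_sub_C _, (monic_X_sub_C r).natDegree_pow]
  simp

theorem derivative_X_pow_mul_comp_X_pow {R : Type*} [CommSemiring R] (P : R[X]) {a n : ℕ}
    (ha : a ≠ 0) (hn : n ≠ 0) :
    derivative (X ^ a * P.comp (X ^ n)) =
      X ^ (a - 1) * (C (a : R) * P + C (n : R) * X * derivative P).comp (X ^ n) := by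
  obtain ⟨a, rfl⟩ := Nat.exists_eq_add_one_of_ne_zero ha
  obtain ⟨n, rfl⟩ := Nat.exists_eq_add_one_of_ne_zero hn
  simp only [derivative_mul, derivative_comp, derivative_X_pow, add_comp, mul_comp, C_comp,
    X_comp, Nat.add_sub_cancel]
  ring

theorem eq_C_leadingCoeff_mul_pow_mul_prod {R : Type*} [CommRing R] [IsDomain R]
    {p : R[X]} (hp : p ≠ 0) {a : R} {k : ℕ} (hk : (X - C a) ^ k ∣ p) {t : Finset R}
    (ha : a ∉ t) (ht : ∀ z ∈ t, p.IsRoot z) (hdeg : p.natDegree ≤ k + t.card) :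
    p = C p.leadingCoeff * (X - C a) ^ k * ∏ z ∈ t, (X - C z) := by
  obtain ⟨q, rfl⟩ := hk
  have hq : q ≠ 0 := right_ne_zero_of_mul hp
  have hle : Multiset.replicate k a + t.val ≤ ((X - C a) ^ k * q).roots := by
    rw [roots_mul hp, roots_pow, roots_X_sub_C, Multiset.nsmul_singleton]
    refine add_le_add_right ((Multiset.le_iff_subset t.nodup).2 fun z hz => ?_) _
    have hza : z ≠ a := fun h => ha (h ▸ hz)
    have := ht z hz
    rw [IsRoot, eval_mul, eval_pow, eval_sub, eval_X, eval_C] at this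
    exact (mem_roots hq).2 ((mul_eq_zero.1 this).resolve_left (pow_ne_zero _ (sub_ne_zero.2 hza)))
  have hroots := Multiset.eq_of_le_of_card_le hle <| by
    simpa using (card_roots' _).trans hdeg
  have hsplit : Multiset.card ((X - C a) ^ k * q).roots = ((X - C a) ^ k * q).natDegree :=
    (card_roots' _).antisymm (by simpa [← hroots] using hdeg)
  conv_lhs => rw [← C_leadingCoeff_mul_prod_multiset_X_sub_C hsplit, ← hroots]
  rw [Multiset.map_add, Multiset.prod_add, Multiset.map_replicate, Multiset.prod_replicate,
    mul_assoc]
  rfl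

theorem exists_roots_derivative_Ioo (p : ℝ[X]) (hp : derivative p ≠ 0) {x y : ℝ}
    {s : Finset ℝ} (hs : ∀ z ∈ s, z ∈ Icc x y ∧ p.IsRoot z) :
    ∃ t : Finset ℝ, (∀ z ∈ t, z ∈ Ioo x y ∧ (derivative p).IsRoot z) ∧ s.card ≤ t.card + 1 := by
  classical
  refine ⟨{z ∈ (derivative p).roots.toFinset | z ∈ Ioo x y}, fun z hz => ?_,
    Finset.card_le_of_interleaved fun u hu v hv huv _ => ?_⟩
  · rw [Finset.mem_filter, Multiset.mem_toFinset, mem_roots hp] at hz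
    exact hz.symm
  · obtain ⟨z, hz, hz0⟩ := exists_deriv_eq_zero huv p.continuousOn
      ((hs u hu).2.trans (hs v hv).2.symm)
    refine ⟨z, ?_, hz⟩
    rw [Finset.mem_filter, Multiset.mem_toFinset, mem_roots hp, IsRoot, ← p.deriv]
    exact ⟨hz0, (hs u hu).1.1.trans_lt hz.1, hz.2.trans_le (hs v hv).1.2⟩

theorem exists_roots_Ioo_of_eq_comp_X_pow {G R : ℝ[X]} {K : ℝ} (hK : K ≠ 0) {j n : ℕ}
    (hn : n ≠ 0) (hG : G = C K * X ^ j * R.comp (X ^ n)) {t : Finset ℝ}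
    (ht : ∀ z ∈ t, z ∈ Ioo 0 1 ∧ G.IsRoot z) :
    ∃ t' : Finset ℝ, (∀ z ∈ t', z ∈ Ioo 0 1 ∧ R.IsRoot z) ∧ t'.card = t.card := by
  classical
  refine ⟨t.image (· ^ n), ?_, Finset.card_image_of_injOn fun u hu v hv huv => ?_⟩
  · simp only [Finset.mem_image]
    rintro _ ⟨z, hz, rfl⟩
    obtain ⟨⟨hz0, hz1⟩, hroot⟩ := ht z hz
    refine ⟨⟨pow_pos hz0 n, pow_lt_one₀ hz0.le hz1 hn⟩, ?_⟩
    simpa [hG, IsRoot, hK, hz0.ne'] using hroot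
  · exact (pow_left_inj₀ (ht u hu).1.1.le (ht v hv).1.1.le hn).1 huv

theorem exists_derivative_eq_of_roots_Icc {F R : ℝ[X]} {K : ℝ} (hK : K ≠ 0) {n j k : ℕ}
    (hn : n ≠ 0) (hF' : derivative F = C K * X ^ j * R.comp (X ^ n)) (hF'0 : derivative F ≠ 0)
    (hk : (X - 1) ^ k ∣ R) {s : Finset ℝ} (hs : ∀ z ∈ s, z ∈ Icc 0 1 ∧ F.IsRoot z)
    (hdeg : R.natDegree + 1 ≤ k + s.card) :
    ∃ (K' : ℝ) (m : ℕ) (e : Fin m → ℝ), K' ≠ 0 ∧ (∀ i, e i ∈ Ioo 0 1) ∧ Function.Injective e ∧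
      derivative F = C K' * X ^ j * (X ^ n - 1) ^ k * ∏ i, (X ^ n - C (e i)) := by
  obtain ⟨t, ht, hst⟩ := exists_roots_derivative_Ioo F hF'0 hs
  obtain ⟨t', ht', htt'⟩ := exists_roots_Ioo_of_eq_comp_X_pow hK hn hF' ht
  have hR : R ≠ 0 := by rintro rfl; simp [hF'] at hF'0
  have hfac := eq_C_leadingCoeff_mul_pow_mul_prod hR (a := 1) (by simpa using hk)
    (fun h => (ht' 1 h).1.2.false) (fun z hz => (ht' z hz).2) (by omega)
  refine ⟨K * R.leadingCoeff, t'.card, (↑) ∘ t'.equivFin.symm,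
    mul_ne_zero hK (by simpa using hR), fun i => (ht' _ (t'.equivFin.symm i).2).1,
    Subtype.val_injective.comp t'.equivFin.symm.injective, ?_⟩
  have hprod : ∏ i, (X ^ n - C (t'.equivFin.symm i : ℝ)) = ∏ z ∈ t', (X ^ n - C z) := by
    rw [← Finset.prod_coe_sort t']
    exact Equiv.prod_comp t'.equivFin.symm fun z => X ^ n - C (z : ℝ)
  rw [hF', Function.comp_def, hprod]
  conv_lhs => rw [hfac]
  simp only [mul_comp, pow_comp, sub_comp, prod_comp, X_comp, C_comp, one_comp, map_one, map_mul]
  ring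

end Polynomial

theorem exists_roots_Icc_of_prod_X_pow_sub_C (K : ℝ) {n : ℕ} (hn : n ≠ 0) (a b : ℕ) {d : ℕ}
    {c : Fin d → ℝ} (hc : ∀ i, c i ∈ Ioo (0 : ℝ) 1) (hcinj : Function.Injective c) :
    ∃ s : Finset ℝ, (∀ z ∈ s, z ∈ Icc 0 1 ∧
      (C K * X ^ a * (X ^ n - 1) ^ b * ∏ i, (X ^ n - C (c i))).IsRoot z) ∧
      d + (if 0 < a then 1 else 0) + (if 0 < b then 1 else 0) ≤ s.card := by
  classical
  have hroot (i : Fin d) : (c i ^ (n⁻¹ : ℝ)) ^ n = c i :=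
    Real.rpow_inv_natCast_pow (hc i).1.le hn
  set T := Finset.univ.image fun i => c i ^ (n⁻¹ : ℝ)
  have hT : T.card = d := by
    rw [Finset.card_image_of_injective _ fun i j h => hcinj (by rw [← hroot i, ← hroot j, h]),
      Finset.card_fin]
  have hTIoo : ∀ z ∈ T, z ∈ Ioo 0 1 := by
    simp only [T, Finset.mem_image, Finset.mem_univ, true_and]
    rintro _ ⟨i, rfl⟩
    exact ⟨Real.rpow_pos_of_pos (hc i).1 _,
      Real.rpow_lt_one (hc i).1.le (hc i).2 (by positivity)⟩
  refine ⟨T ∪ (if 0 < a then {0} else ∅) ∪ (if 0 < b then {1} else ∅), fun z hz => ?_, ?_⟩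
  · simp only [Finset.mem_union] at hz
    rcases hz with (hz | hz) | hz
    · obtain ⟨i, -, rfl⟩ := Finset.mem_image.1 hz
      refine ⟨Ioo_subset_Icc_self (hTIoo _ hz), ?_⟩
      simp only [IsRoot, eval_mul, eval_prod, eval_sub, eval_pow, eval_X, eval_C, hroot]
      exact mul_eq_zero_of_right _ (Finset.prod_eq_zero (Finset.mem_univ i) (sub_self _))
    · split_ifs at hz with ha
      · rw [Finset.mem_singleton.1 hz]
        simp [ha.ne']
      · simp at hz
    · split_ifs at hz with hb
      · rw [Finset.mem_singleton.1 hz]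
        simp [hb.ne']
      · simp at hz
  · have h0 : (0 : ℝ) ∉ T := fun h => (hTIoo 0 h).1.false
    have h1 : (1 : ℝ) ∉ T := fun h => (hTIoo 1 h).2.false
    split_ifs <;> simp [Finset.card_insert_of_notMem, h0, h1, hT]

/-- Rolle-type lemma: if
`F(t) = C·t^a·(t^n − 1)^b·∏ᵢ(t^n − cᵢ)` is a real polynomial of positive
degree, with `c₁,…,c_d` pairwise distinct in `(0,1)`, then `F'` has the
same shape, with the stated behaviour of the exponents `a` and `b`. -/
theorem stmt5 (n : ℕ) (hn : 0 < n) (K : ℝ) (hK : K ≠ 0)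
    (a b d : ℕ) (c : Fin d → ℝ) (hc : ∀ i, c i ∈ Set.Ioo (0 : ℝ) 1)
    (hcinj : Function.Injective c)
    (F : Polynomial ℝ)
    (hF : F = Polynomial.C K * X ^ a * (X ^ n - 1) ^ b *
      ∏ i : Fin d, (X ^ n - Polynomial.C (c i)))
    (hdeg : 0 < F.natDegree) :
    ∃ (K' : ℝ) (a' b' d' : ℕ) (c' : Fin d' → ℝ), K' ≠ 0 ∧
      (∀ i, c' i ∈ Set.Ioo (0 : ℝ) 1) ∧ Function.Injective c' ∧
      derivative F = Polynomial.C K' * X ^ a' * (X ^ n - 1) ^ b' *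
        ∏ i : Fin d', (X ^ n - Polynomial.C (c' i)) ∧
      (0 < a → a' = a - 1) ∧ (a = 0 → a' = n - 1) ∧
      (0 < b → b' = b - 1) ∧ (b = 0 → b' = 0) := by
  set P : ℝ[X] := (X - 1) ^ b * ∏ i, (X - C (c i))
  have hFP : F = C K * (X ^ a * P.comp (X ^ n)) := by
    rw [hF]
    simp only [P, mul_comp, pow_comp, sub_comp, prod_comp, X_comp, C_comp, one_comp]
    ring
  have hPdeg : P.natDegree = b + d := by
    simpa using natDegree_X_sub_C_pow_mul_prod 1 b Finset.univ c
  have hF'0 : derivative F ≠ 0 := fun h => hdeg.ne' (derivative_eq_zero.1 h)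
  have hdvd : (X - 1) ^ (b - 1) ∣ P := (pow_dvd_pow _ (b.sub_le 1)).mul_right _
  have hdvd' : (X - 1) ^ (b - 1) ∣ derivative P :=
    pow_sub_one_dvd_derivative_of_pow_dvd (dvd_mul_right _ _)
  obtain ⟨s, hs, hcard⟩ := exists_roots_Icc_of_prod_X_pow_sub_C K hn.ne' a b hc hcinj
  rw [← hF] at hs
  rcases Nat.eq_zero_or_pos a with rfl | ha
  · have hF' : derivative F = C K * X ^ (n - 1) * (C (n : ℝ) * derivative P).comp (X ^ n) := by
      rw [hFP, pow_zero, one_mul, derivative_C_mul, derivative_comp, derivative_X_pow, mul_comp,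
        C_comp]
      ring
    have hP0 : P.natDegree ≠ 0 := fun h => hF'0 (by simp [hF', derivative_of_natDegree_zero h])
    have hRdeg := (natDegree_C_mul_le (n : ℝ) _).trans_lt (natDegree_derivative_lt hP0)
    obtain ⟨K', d', c', hK', hc', hinj, heq⟩ := exists_derivative_eq_of_roots_Icc hK hn.ne' hF'
      hF'0 (hdvd'.mul_left _) hs (by split_ifs at hcard <;> omega)
    exact ⟨K', n - 1, b - 1, d', c', hK', hc', hinj, heq, by omega, fun _ => rfl, fun _ => rfl,
      by omega⟩
  · have hF' : derivative F =
        C K * X ^ (a - 1) * (C (a : ℝ) * P + C (n : ℝ) * X * derivative P).comp (X ^ n) := by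
      rw [hFP, derivative_C_mul, derivative_X_pow_mul_comp_X_pow P ha.ne' hn.ne', ← mul_assoc]
    have hRdeg : (C (a : ℝ) * P + C (n : ℝ) * X * derivative P).natDegree ≤ b + d := by
      rw [mul_assoc, ← hPdeg]
      exact natDegree_add_le_of_degree_le (natDegree_C_mul_le _ _)
        ((natDegree_C_mul_le _ _).trans (natDegree_X_mul_derivative_le P))
    obtain ⟨K', d', c', hK', hc', hinj, heq⟩ := exists_derivative_eq_of_roots_Icc hK hn.ne' hF'
      hF'0 ((hdvd.mul_left _).add (hdvd'.mul_left _)) hs (by split_ifs at hcard <;> omega)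
    exact ⟨K', a - 1, b - 1, d', c', hK', hc', hinj, heq, fun _ => rfl, by omega, fun _ => rfl,
      by omega⟩
end

section
/- Let F(z) = (z^n − c)^e with c ≠ 0. Then for every k with F^{(k)} ≠ 0, the polynomial F^{(k)}(z) has no multiple complex roots other than possibly 0 and the n-th roots of c. -/
open Polynomial Finset

namespace Stmt7Aux

/-- The key real polynomial family: `A n e k = Σ_j (-1)^(e-j) C(e,j) (nj)_k X^j`,
which encodes `z^k F^(k)(z) = c^e * A(z^n/c)` for `F = (z^n-c)^e`. -/
noncomputable def A (n e k : ℕ) : Polynomial ℝ :=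
  ∑ j ∈ Finset.range (e + 1),
    C ((-1 : ℝ) ^ (e - j) * (e.choose j) * ((n * j).descFactorial k)) * X ^ j

lemma coeff_A (n e k j : ℕ) :
    (A n e k).coeff j =
      if j ≤ e then (-1 : ℝ) ^ (e - j) * (e.choose j) * ((n * j).descFactorial k) else 0 := by
  rw [A, finset_sum_coeff]
  simp only [coeff_C_mul, coeff_X_pow]
  rw [Finset.sum_eq_single j]
  · by_cases hj : j ≤ e
    · simp [hj]
    · rw [if_neg hj, Nat.choose_eq_zero_of_lt (by omega)]
      simp
  · intro b _ hb
    simp [Ne.symm hb]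
  · intro h
    simp only [Finset.mem_range, Nat.lt_succ_iff, not_le] at h
    rw [Nat.choose_eq_zero_of_lt (by omega)]
    simp

lemma natDegree_A_le (n e k : ℕ) : (A n e k).natDegree ≤ e := by
  apply natDegree_le_iff_coeff_eq_zero.mpr
  intro m hm
  rw [coeff_A, if_neg (by omega)]

lemma desc_cast (N k : ℕ) :
    ((N.descFactorial (k + 1) : ℝ)) = ((N : ℝ) - k) * N.descFactorial k := by
  rcases le_or_gt k N with h | h
  · rw [Nat.descFactorial_succ]
    push_cast [h]
    ring
  · rw [Nat.descFactorial_of_lt (by omega), Nat.descFactorial_of_lt h]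
    simp

lemma A_succ (n e k : ℕ) :
    A n e (k + 1) = C (n : ℝ) * X * derivative (A n e k) - C (k : ℝ) * A n e k := by
  ext j
  rw [coeff_sub, coeff_C_mul, coeff_A]
  cases j with
  | zero =>
      have h0 : (C (n : ℝ) * X * derivative (A n e k)).coeff 0 = 0 := by
        rw [mul_comm (C (n : ℝ)) X, mul_assoc, coeff_X_mul_zero]
      rw [h0, coeff_A]
      rcases Nat.eq_zero_or_pos k with hk | hk
      · subst hk; simp
      · simp only [Nat.mul_zero, Nat.descFactorial_of_lt (by omega : 0 < k + 1),
          Nat.descFactorial_of_lt hk]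
        simp
  | succ j =>
      have h1 : (C (n : ℝ) * X * derivative (A n e k)).coeff (j + 1)
          = (n : ℝ) * ((A n e k).coeff (j + 1) * (j + 1)) := by
        rw [mul_comm (C (n : ℝ)) X, mul_assoc, coeff_X_mul, coeff_C_mul, coeff_derivative]
      rw [h1, coeff_A]
      by_cases hj : j + 1 ≤ e
      · simp only [if_pos hj]
        rw [desc_cast]
        push_cast
        ring
      · simp only [if_neg hj]
        ring

lemma A_zero (n e : ℕ) : A n e 0 = (X - 1) ^ e := by
  have h : (X - 1 : ℝ[X]) = X + (-1 : ℝ[X]) := by ring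
  rw [h, add_pow, A]
  apply Finset.sum_congr rfl
  intro j _
  have h2 : ((-1 : ℝ[X])) ^ (e - j) = C ((-1 : ℝ) ^ (e - j)) := by
    simp [C_pow]
  rw [h2]
  have h3 : ((e.choose j : ℝ[X])) = C ((e.choose j : ℝ)) := by
    simp
  rw [h3]
  simp only [Nat.descFactorial_zero, Nat.cast_one, mul_one]
  rw [mul_assoc, ← C_mul]
  exact mul_comm _ _


/-- Sign of a product of nonzero reals is determined by the number of negative factors. -/
lemma sign_prod (s : Finset ℕ) (f : ℕ → ℝ) (h : ∀ x ∈ s, f x ≠ 0) :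
    0 < (-1 : ℝ) ^ ((s.filter (fun x => f x < 0)).card) * ∏ x ∈ s, f x := by
  induction s using Finset.induction_on with
  | empty => simp
  | @insert a s' hx ih =>
      rw [Finset.prod_insert hx, Finset.filter_insert]
      have ha : f a ≠ 0 := h a (Finset.mem_insert_self a s')
      have ih' := ih (fun x hxs => h x (Finset.mem_insert_of_mem hxs))
      rcases lt_or_gt_of_ne ha with hneg | hpos
      · rw [if_pos hneg, Finset.card_insert_of_notMem
          (fun hmem => hx (Finset.mem_of_mem_filter a hmem)), pow_succ]
        have : (0:ℝ) < ((-1) ^ (s'.filter fun x => f x < 0).card * ∏ x ∈ s', f x) * (-(f a)) :=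
          mul_pos ih' (by linarith)
        nlinarith [this]
      · rw [if_neg (by exact fun hc => absurd hc (not_lt.mpr hpos.le))]
        have : (0:ℝ) < ((-1) ^ (s'.filter fun x => f x < 0).card * ∏ x ∈ s', f x) * f a :=
          mul_pos ih' hpos
        nlinarith [this]

/-- IVT for polynomials, signed version. -/
lemma poly_ivt {p : ℝ[X]} {x y : ℝ} (hxy : x < y) (hs : eval x p * eval y p < 0) :
    ∃ z, z ∈ Set.Ioo x y ∧ eval z p = 0 := by
  have hcont : ContinuousOn (fun t => eval t p) (Set.Icc x y) :=
    (Polynomial.continuous p).continuousOn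
  rcases mul_neg_iff.mp hs with ⟨h1, h2⟩ | ⟨h1, h2⟩
  · have := intermediate_value_Ioo' hxy.le hcont
    have h0 : (0:ℝ) ∈ Set.Ioo (eval y p) (eval x p) := ⟨h2, h1⟩
    obtain ⟨z, hz, hz0⟩ := this h0
    exact ⟨z, hz, hz0⟩
  · have := intermediate_value_Ioo hxy.le hcont
    have h0 : (0:ℝ) ∈ Set.Ioo (eval x p) (eval y p) := ⟨h1, h2⟩
    obtain ⟨z, hz, hz0⟩ := this h0
    exact ⟨z, hz, hz0⟩

/-- A continuous function positive at a point is positive somewhere in any interval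
to the right of the point. -/
lemma exists_right {g : ℝ → ℝ} (hg : Continuous g) {x₀ u : ℝ} (hx : x₀ < u) (h0 : 0 < g x₀) :
    ∃ x, x ∈ Set.Ioo x₀ u ∧ 0 < g x := by
  obtain ⟨ε, hε, hball⟩ := Metric.continuousAt_iff.mp hg.continuousAt (ε := g x₀) h0
  refine ⟨x₀ + min ε (u - x₀) / 2, ⟨by simp [hε, hx], by
    have := min_le_right ε (u - x₀); linarith⟩, ?_⟩
  have hd : dist (x₀ + min ε (u - x₀) / 2) x₀ < ε := by
    rw [Real.dist_eq]
    have h1 : (0:ℝ) < min ε (u - x₀) := lt_min hε (by linarith)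
    have h2 := min_le_left ε (u - x₀)
    rw [abs_of_pos (by linarith)]
    linarith
  have := hball hd
  rw [Real.dist_eq, abs_lt] at this
  linarith [this.1]

/-- A continuous function positive at a point is positive somewhere in any interval
to the left of the point. -/
lemma exists_left {g : ℝ → ℝ} (hg : Continuous g) {x₀ l : ℝ} (hx : l < x₀) (h0 : 0 < g x₀) :
    ∃ x, x ∈ Set.Ioo l x₀ ∧ 0 < g x := by
  obtain ⟨ε, hε, hball⟩ := Metric.continuousAt_iff.mp hg.continuousAt (ε := g x₀) h0
  refine ⟨x₀ - min ε (x₀ - l) / 2, ⟨by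
    have := min_le_right ε (x₀ - l); linarith, by simp [hε, hx]⟩, ?_⟩
  have hd : dist (x₀ - min ε (x₀ - l) / 2) x₀ < ε := by
    rw [Real.dist_eq]
    have h1 : (0:ℝ) < min ε (x₀ - l) := lt_min hε (by linarith)
    have h2 := min_le_left ε (x₀ - l)
    rw [abs_of_nonpos (by linarith), neg_sub]
    linarith
  have := hball hd
  rw [Real.dist_eq, abs_lt] at this
  linarith [this.1]

/-- From a strictly increasing chain of sample points with alternating signs, we get roots
strictly between consecutive sample points. -/
lemma chain_roots (p : ℝ[X]) (M K : ℕ) (t : ℕ → ℝ)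
    (hmono : ∀ i, i + 1 < M → t i < t (i + 1))
    (hsign : ∀ i, i < M → 0 < (-1 : ℝ) ^ (K + i) * eval (t i) p) :
    ∃ r : ℕ → ℝ, ∀ i, i + 1 < M →
      t i < r i ∧ r i < t (i + 1) ∧ eval (r i) p = 0 := by
  have key : ∀ i, i + 1 < M → ∃ z, z ∈ Set.Ioo (t i) (t (i + 1)) ∧ eval z p = 0 := by
    intro i hi
    apply poly_ivt (hmono i hi)
    have h1 := hsign i (by omega)
    have h2 := hsign (i + 1) hi
    have hK : K + (i + 1) = (K + i) + 1 := by omega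
    rw [hK, pow_succ] at h2
    have hs2 : ((-1:ℝ) ^ (K + i)) ^ 2 = 1 := by
      rw [← pow_mul, mul_comm, pow_mul]
      norm_num
    nlinarith [h1, h2, hs2]
  classical
  refine ⟨fun i => if h : i + 1 < M then (key i h).choose else 0, ?_⟩
  intro i hi
  simp only [dif_pos hi]
  obtain ⟨hz, hz0⟩ := (key i hi).choose_spec
  exact ⟨hz.1, hz.2, hz0⟩



/-- parity helper -/
lemma neg_one_pow_congr {s t : ℕ} (h : s % 2 = t % 2) : ((-1 : ℝ) ^ s = (-1) ^ t) := by
  rcases Nat.even_or_odd s with hs | hs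
  · have ht : Even t := by
      rw [Nat.even_iff] at hs ⊢; omega
    rw [hs.neg_one_pow, ht.neg_one_pow]
  · have ht : Odd t := by
      rw [Nat.odd_iff] at hs ⊢; omega
    rw [hs.neg_one_pow, ht.neg_one_pow]


/-- The inductive invariant: `A n e k` splits over `ℝ` as
`c₀ X^a (X-1)^(e-k) ∏ (X - rᵢ)` with the `rᵢ` distinct points of `(0,1)`. -/
def Inv (n e k : ℕ) : Prop :=
  ∃ (m a : ℕ) (rr : ℕ → ℝ),
    (∀ p q, p < q → q < m → rr p < rr q) ∧
    (∀ i, i < m → rr i ∈ Set.Ioo (0 : ℝ) 1) ∧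
    k ≤ n * a ∧ n * a < k + n ∧ a + (e - k) + m = e ∧
    A n e k = C (((n * e).descFactorial k : ℝ)) * X ^ a * (X - 1) ^ (e - k) *
      ∏ i ∈ Finset.range m, (X - C (rr i))

lemma eval_fac (x c₀ : ℝ) (a b m : ℕ) (rr : ℕ → ℝ) :
    eval x (C c₀ * X ^ a * (X - 1) ^ b * ∏ i ∈ Finset.range m, (X - C (rr i))) =
      c₀ * x ^ a * (x - 1) ^ b * ∏ i ∈ Finset.range m, (x - rr i) := by
  simp [eval_prod]

lemma inv_zero (n e : ℕ) (hn : 0 < n) : Inv n e 0 := by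
  refine ⟨0, 0, fun _ => 0, by omega, by omega, by omega, by omega, by omega, ?_⟩
  simp [A_zero]

/-- factor out one root from the invariant factorization -/
lemma fac_erase {n e k m a : ℕ} {rr : ℕ → ℝ} {i : ℕ} (him : i < m)
    (hfac : A n e k = C (((n * e).descFactorial k : ℝ)) * X ^ a * (X - 1) ^ (e - k) *
      ∏ i ∈ Finset.range m, (X - C (rr i))) :
    A n e k = (X - C (rr i)) *
      (C (((n * e).descFactorial k : ℝ)) * X ^ a * (X - 1) ^ (e - k) *
        ∏ j ∈ (Finset.range m).erase i, (X - C (rr j))) := by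
  rw [hfac, ← Finset.mul_prod_erase (Finset.range m) _ (Finset.mem_range.mpr him)]
  ring

lemma deriv_at_root {n e k m a : ℕ} {rr : ℕ → ℝ} {i : ℕ} (him : i < m)
    (hfac : A n e k = C (((n * e).descFactorial k : ℝ)) * X ^ a * (X - 1) ^ (e - k) *
      ∏ i ∈ Finset.range m, (X - C (rr i))) :
    eval (rr i) (derivative (A n e k)) =
      ((n * e).descFactorial k : ℝ) * (rr i) ^ a * (rr i - 1) ^ (e - k) *
        ∏ j ∈ (Finset.range m).erase i, (rr i - rr j) := by
  rw [fac_erase him hfac, derivative_mul]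
  simp [eval_prod]

/-- the sign of the erased product at the `i`-th root -/
lemma prod_erase_sign {m i : ℕ} (him : i < m) (rr : ℕ → ℝ)
    (hmono : ∀ p q, p < q → q < m → rr p < rr q) :
    0 < (-1 : ℝ) ^ (m + 1 + i) * ∏ j ∈ (Finset.range m).erase i, (rr i - rr j) := by
  have hne : ∀ x ∈ (Finset.range m).erase i, rr i - rr x ≠ 0 := by
    intro x hx
    rw [Finset.mem_erase, Finset.mem_range] at hx
    rcases lt_trichotomy x i with h | h | h
    · have := hmono x i h him; intro hc; linarith
    · exact absurd h hx.1
    · have := hmono i x h hx.2; intro hc; linarith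
  have h := sign_prod ((Finset.range m).erase i) (fun j => rr i - rr j) hne
  have hfilt : ((Finset.range m).erase i).filter (fun j => rr i - rr j < 0) =
      Finset.Ioo i m := by
    ext x
    simp only [Finset.mem_filter, Finset.mem_erase, Finset.mem_range, Finset.mem_Ioo]
    constructor
    · rintro ⟨⟨hxi, hxm⟩, hneg⟩
      rcases lt_trichotomy x i with h' | h' | h'
      · have := hmono x i h' him; exfalso; linarith
      · exact absurd h' hxi
      · exact ⟨h', hxm⟩
    · rintro ⟨hix, hxm⟩
      have := hmono i x hix hxm
      exact ⟨⟨by omega, hxm⟩, by linarith⟩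
  rw [hfilt, Nat.card_Ioo] at h
  rwa [neg_one_pow_congr (s := m + 1 + i) (t := m - i - 1) (by omega)]



lemma desc_pos {N k : ℕ} (h : k ≤ N) : (0:ℝ) < (N.descFactorial k : ℝ) := by
  have : N.descFactorial k ≠ 0 := by
    rw [Ne, Nat.descFactorial_eq_zero_iff_lt]; omega
  have : 0 < N.descFactorial k := Nat.pos_of_ne_zero this
  exact_mod_cast this

lemma coeff_A_e (n e k : ℕ) : (A n e k).coeff e = ((n * e).descFactorial k : ℝ) := by
  rw [coeff_A, if_pos le_rfl]
  simp

lemma natDegree_A (n e k : ℕ) (hk : k ≤ n * e) : (A n e k).natDegree = e := by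
  refine le_antisymm (natDegree_A_le n e k) (le_natDegree_of_ne_zero ?_)
  rw [coeff_A_e]
  exact ne_of_gt (desc_pos hk)

lemma A_ne_zero (n e k : ℕ) (hk : k ≤ n * e) : A n e k ≠ 0 := fun h => by
  have := coeff_A_e n e k
  rw [h] at this
  simp at this
  exact absurd this.symm (ne_of_gt (desc_pos hk))

lemma leadingCoeff_A (n e k : ℕ) (hk : k ≤ n * e) :
    (A n e k).leadingCoeff = ((n * e).descFactorial k : ℝ) := by
  rw [leadingCoeff, natDegree_A n e k hk, coeff_A_e]

/-- Assemble the invariant for `k+1` from found data. -/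
lemma build (n e k : ℕ) (hk1 : k + 1 ≤ n * e) (a' m' : ℕ) (rr' : ℕ → ℝ)
    (hmono' : ∀ p q, p < q → q < m' → rr' p < rr' q)
    (hIoo' : ∀ i, i < m' → rr' i ∈ Set.Ioo (0:ℝ) 1)
    (hroots : ∀ i, i < m' → eval (rr' i) (A n e (k+1)) = 0)
    (hXdvd : X ^ a' ∣ A n e (k+1))
    (hX1dvd : (X - 1) ^ (e - (k+1)) ∣ A n e (k+1))
    (hsum' : a' + (e - (k + 1)) + m' = e)
    (hka' : k + 1 ≤ n * a') (hkan' : n * a' < (k + 1) + n) : Inv n e (k+1) := by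
  classical
  have hrr'ne : ∀ i, i < m' → ∀ j, j < m' → i ≠ j → rr' i ≠ rr' j := by
    intro i hi j hj hij
    rcases Nat.lt_or_ge i j with h | h
    · exact ne_of_lt (hmono' i j h hj)
    · have : j < i := by omega
      exact (ne_of_lt (hmono' j i this hi)).symm
  set b' : ℕ := e - (k + 1) with hb'
  -- divisibility of the product of the linear factors
  have hprod_dvd : (∏ i ∈ Finset.range m', (X - C (rr' i))) ∣ A n e (k+1) := by
    apply Finset.prod_dvd_of_coprime
    · intro i hi j hj hij
      simp only [Finset.mem_coe, Finset.mem_range] at hi hj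
      exact isCoprime_X_sub_C_of_isUnit_sub
        (isUnit_iff_ne_zero.mpr (sub_ne_zero_of_ne (hrr'ne i hi j hj hij)))
    · intro i hi
      rw [Finset.mem_range] at hi
      exact dvd_iff_isRoot.mpr (hroots i hi)
  have hX1C : (X - 1 : ℝ[X]) = X - C 1 := by simp
  have hcop1 : IsCoprime ((X - 1 : ℝ[X]) ^ b') (∏ i ∈ Finset.range m', (X - C (rr' i))) := by
    apply IsCoprime.pow_left
    apply IsCoprime.prod_right
    intro i hi
    rw [Finset.mem_range] at hi
    rw [hX1C]
    exact isCoprime_X_sub_C_of_isUnit_sub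
      (isUnit_iff_ne_zero.mpr (sub_ne_zero_of_ne (ne_of_gt (hIoo' i hi).2)))
  have h2dvd : ((X - 1 : ℝ[X]) ^ b' * ∏ i ∈ Finset.range m', (X - C (rr' i))) ∣ A n e (k+1) :=
    hcop1.mul_dvd hX1dvd hprod_dvd
  have hcop2 : IsCoprime ((X : ℝ[X]) ^ a')
      ((X - 1 : ℝ[X]) ^ b' * ∏ i ∈ Finset.range m', (X - C (rr' i))) := by
    apply IsCoprime.pow_left
    apply IsCoprime.mul_right
    · apply IsCoprime.pow_right
      exact ⟨1, -1, by ring⟩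
    · apply IsCoprime.prod_right
      intro i hi
      rw [Finset.mem_range] at hi
      have hne : rr' i ≠ 0 := ne_of_gt (hIoo' i hi).1
      refine ⟨C ((rr' i)⁻¹), -(C ((rr' i)⁻¹)), ?_⟩
      have hstep : C ((rr' i)⁻¹) * X + -(C ((rr' i)⁻¹)) * (X - C (rr' i)) =
          C ((rr' i)⁻¹) * C (rr' i) := by ring
      rw [hstep, ← C_mul, inv_mul_cancel₀ hne, C_1]
  set P : ℝ[X] := X ^ a' * ((X - 1) ^ b' * ∏ i ∈ Finset.range m', (X - C (rr' i))) with hP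
  have hPdvd : P ∣ A n e (k+1) := hcop2.mul_dvd hXdvd h2dvd
  have hmonicP : P.Monic := by
    apply (monic_X_pow a').mul
    apply Monic.mul
    · rw [hX1C]; exact (monic_X_sub_C (1:ℝ)).pow b'
    · exact monic_prod_of_monic _ _ (fun i _ => monic_X_sub_C _)
  have hdegP : P.natDegree = a' + (b' + m') := by
    rw [hP]
    rw [Monic.natDegree_mul (monic_X_pow a') (by
      apply Monic.mul
      · rw [hX1C]; exact (monic_X_sub_C (1:ℝ)).pow b'
      · exact monic_prod_of_monic _ _ (fun i _ => monic_X_sub_C _))]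
    rw [Monic.natDegree_mul (by rw [hX1C]; exact (monic_X_sub_C (1:ℝ)).pow b')
      (monic_prod_of_monic _ _ (fun i _ => monic_X_sub_C _))]
    rw [natDegree_X_pow, hX1C, natDegree_pow, natDegree_X_sub_C, mul_one]
    congr 1
    rw [natDegree_prod_of_monic _ _ (fun i _ => monic_X_sub_C _)]
    simp
  obtain ⟨q, hq⟩ := hPdvd
  have hAne : A n e (k+1) ≠ 0 := A_ne_zero n e (k+1) hk1
  have hqne : q ≠ 0 := by rintro rfl; rw [mul_zero] at hq; exact hAne hq
  have hdegq : q.natDegree = 0 := by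
    have h1 := natDegree_A n e (k+1) hk1
    rw [hq, natDegree_mul hmonicP.ne_zero hqne, hdegP] at h1
    omega
  obtain ⟨x, hx⟩ := Polynomial.natDegree_eq_zero.mp hdegq
  have hxval : x = ((n * e).descFactorial (k+1) : ℝ) := by
    have h1 := leadingCoeff_A n e (k+1) hk1
    rw [hq, leadingCoeff_mul, hmonicP.leadingCoeff, one_mul, ← hx, leadingCoeff_C] at h1
    exact h1
  refine ⟨m', a', rr', hmono', hIoo', hka', hkan', hsum', ?_⟩
  rw [hq, ← hx, hxval, hP]
  ring

/-- package: chain of sample points with alternating signs gives a sorted family of interior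
roots, one between each pair of consecutive sample points. -/
lemma chain_package (p : ℝ[X]) (M K : ℕ) (t : ℕ → ℝ)
    (hmono : ∀ i, i + 1 < M → t i < t (i + 1))
    (hIoo : ∀ i, i < M → t i ∈ Set.Ioo (0:ℝ) 1)
    (hsign : ∀ i, i < M → 0 < (-1 : ℝ) ^ (K + i) * eval (t i) p) :
    ∃ rr' : ℕ → ℝ, (∀ i j, i < j → j < M - 1 → rr' i < rr' j) ∧
      (∀ i, i < M - 1 → rr' i ∈ Set.Ioo (0:ℝ) 1) ∧
      (∀ i, i < M - 1 → eval (rr' i) p = 0) := by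
  have tfull : ∀ i j, i < j → j < M → t i < t j := by
    intro i j hij hjM
    induction j with
    | zero => omega
    | succ j ih =>
        rcases Nat.lt_or_ge i j with h | h
        · exact lt_trans (ih h (by omega)) (hmono j (by omega))
        · have : i = j := by omega
          subst this
          exact hmono i (by omega)
  obtain ⟨r, hr⟩ := chain_roots p M K t hmono hsign
  refine ⟨r, ?_, ?_, ?_⟩
  · intro i j hij hj
    have hi1 : i + 1 < M := by omega
    have hj1 : j + 1 < M := by omega
    obtain ⟨h1, h2, _⟩ := hr i hi1
    obtain ⟨h3, h4, _⟩ := hr j hj1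
    have : t (i+1) ≤ t j := by
      rcases Nat.lt_or_ge (i+1) j with h | h
      · exact le_of_lt (tfull _ _ h (by omega))
      · have : i + 1 = j := by omega
        rw [this]
    linarith
  · intro i hi
    obtain ⟨h1, h2, _⟩ := hr i (by omega)
    have hI0 := hIoo i (by omega)
    have hI1 := hIoo (i+1) (by omega)
    exact ⟨lt_trans hI0.1 h1, lt_trans h2 hI1.2⟩
  · intro i hi
    exact (hr i (by omega)).2.2


lemma X_mul_deriv_pow (a : ℕ) : (X : ℝ[X]) * derivative (X ^ a) = C (a : ℝ) * X ^ a := by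
  cases a with
  | zero => simp
  | succ a =>
      rw [derivative_X_pow, Nat.add_sub_cancel, pow_succ]
      push_cast
      ring

lemma flip_sign_prod (b m : ℕ) (x : ℝ) (rr : ℕ → ℝ) :
    (-1:ℝ)^(b+m) * ((x-1)^b * ∏ i ∈ Finset.range m, (x - rr i))
      = (1-x)^b * ∏ i ∈ Finset.range m, (rr i - x) := by
  have h1 : ((1-x):ℝ)^b = (-1)^b * (x-1)^b := by
    rw [← mul_pow]; congr 1; ring
  have h2 : ∏ i ∈ Finset.range m, (rr i - x) =
      (-1:ℝ)^m * ∏ i ∈ Finset.range m, (x - rr i) := by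
    have : ∀ i ∈ Finset.range m, rr i - x = (-1) * (x - rr i) := by intro i _; ring
    rw [Finset.prod_congr rfl this, Finset.prod_mul_distrib, Finset.prod_const,
      Finset.card_range]
  rw [h1, h2, pow_add]
  ring

lemma inv_step (n e k : ℕ) (hn : 0 < n) (hk1 : k + 1 ≤ n * e) (hInv : Inv n e k) :
    Inv n e (k + 1) := by
  classical
  obtain ⟨m, a, rr, hmono, hIoo, hka, hkan, hsum, hfac⟩ := hInv
  set b : ℕ := e - k with hbdef
  have hkne : k ≤ n * e := by omega
  have hc₀ : (0:ℝ) < ((n * e).descFactorial k : ℝ) := desc_pos hkne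
  have hnR : (0:ℝ) < n := by exact_mod_cast hn
  have hA1 : A n e (k+1) = C (n : ℝ) * X * derivative (A n e k) - C (k : ℝ) * A n e k :=
    A_succ n e k
  set c₀ : ℝ := ((n * e).descFactorial k : ℝ) with hc₀def
  -- `G`, `T` : factoring out `X^a`
  set G : ℝ[X] := C c₀ * (X - 1) ^ b * ∏ i ∈ Finset.range m, (X - C (rr i)) with hG
  have hfacb : A n e k = C c₀ * X ^ a * (X - 1) ^ b * ∏ i ∈ Finset.range m, (X - C (rr i)) :=
    hfac
  have hfacX : A n e k = X ^ a * G := by rw [hfacb, hG]; ring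
  set T : ℝ[X] := (C (n:ℝ) * C (a:ℝ) - C (k:ℝ)) * G + C (n:ℝ) * X * derivative G with hTdef
  have hT : A n e (k+1) = X ^ a * T := by
    rw [hA1, hfacX, derivative_mul, hTdef]
    linear_combination (C (n:ℝ) * G) * X_mul_deriv_pow a
  -- sign of `A (k+1)` at the roots `rr i`
  have hsignR : ∀ i, i < m → 0 < (-1:ℝ)^(b+m+1+i) * eval (rr i) (A n e (k+1)) := by
    intro i him
    have hAeval : eval (rr i) (A n e k) = 0 := by
      rw [fac_erase him hfacb]; simp
    have hiv : eval (rr i) (A n e (k+1)) =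
        (n:ℝ) * rr i * eval (rr i) (derivative (A n e k)) := by
      rw [hA1]
      simp only [eval_sub, eval_mul, eval_C, eval_X, hAeval, mul_zero, sub_zero]
    have hder := deriv_at_root him hfacb
    have key : (-1:ℝ)^(b+m+1+i) * eval (rr i) (A n e (k+1)) =
        ((n:ℝ) * rr i * c₀ * (rr i)^a) * ((-1:ℝ)^b * (rr i - 1)^b) *
          ((-1:ℝ)^(m+1+i) * ∏ j ∈ (Finset.range m).erase i, (rr i - rr j)) := by
      rw [hiv, hder, show b+m+1+i = b+(m+1+i) by omega, pow_add]
      ring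
    have hb1 : ((-1:ℝ)^b) * (rr i - 1)^b = (1 - rr i)^b := by
      rw [← mul_pow]; congr 1; ring
    rw [key, hb1]
    have h01 := hIoo i him
    apply mul_pos (mul_pos _ _) (prod_erase_sign him rr hmono)
    · apply mul_pos (mul_pos (mul_pos hnR h01.1) hc₀)
      exact pow_pos h01.1 a
    · exact pow_pos (by linarith [h01.2]) b
  -- positivity of root products
  have hprodrr : (0:ℝ) < ∏ i ∈ Finset.range m, rr i :=
    Finset.prod_pos (fun i hi => (hIoo i (Finset.mem_range.mp hi)).1)
  have hprod1rr : (0:ℝ) < ∏ i ∈ Finset.range m, (1 - rr i) :=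
    Finset.prod_pos (fun i hi => by linarith [(hIoo i (Finset.mem_range.mp hi)).2])
  -- value of T at 0
  have hTeval0 : eval 0 T = ((n:ℝ) * a - k) * eval 0 G := by
    rw [hTdef]
    simp
  have hevalG0 : (-1:ℝ)^(b+m) * eval 0 G = c₀ * ((1-0)^b * ∏ i ∈ Finset.range m, (rr i - 0)) := by
    have h0 : eval 0 G = c₀ * ((0-1)^b * ∏ i ∈ Finset.range m, ((0:ℝ) - rr i)) := by
      rw [hG, eval_mul, eval_mul, eval_C, eval_pow, eval_sub, eval_X, eval_one, eval_prod]
      simp only [eval_sub, eval_X, eval_C]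
      ring
    rw [h0, ← flip_sign_prod b m 0 rr]
    ring
  -- now the case analysis
  have hstep : ∀ i ∈ Finset.range m, (0:ℝ) < rr i - 0 := by
    intro i hi
    simpa using (hIoo i (Finset.mem_range.mp hi)).1
  have hprodrr0 : (0:ℝ) < ∏ i ∈ Finset.range m, (rr i - 0) := Finset.prod_pos hstep
  -- sign of T at 0 when k < n*a
  have hsignT0 : k < n * a → 0 < (-1:ℝ)^(b+m) * eval 0 T := by
    intro hlt
    rw [hTeval0]
    have hre : (-1:ℝ)^(b+m) * (((n:ℝ) * a - k) * eval 0 G)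
        = ((n:ℝ)*a - k) * ((-1:ℝ)^(b+m) * eval 0 G) := by ring
    rw [hre, hevalG0]
    have hna : (k:ℝ) < (n:ℝ) * a := by exact_mod_cast hlt
    apply mul_pos (by linarith)
    apply mul_pos hc₀
    exact mul_pos (pow_pos (by norm_num) b) hprodrr0
  -- epsilon picker
  have pick_eps : ∀ u : ℝ, 0 < u → k < n * a →
      ∃ ε, ε ∈ Set.Ioo (0:ℝ) u ∧ 0 < (-1:ℝ)^(b+m) * eval ε (A n e (k+1)) := by
    intro u hu hlt
    have hg : Continuous fun x => (-1:ℝ)^(b+m) * eval x T :=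
      continuous_const.mul T.continuous
    obtain ⟨ε, hε, hgε⟩ := exists_right hg hu (hsignT0 hlt)
    refine ⟨ε, hε, ?_⟩
    have h2 : eval ε (A n e (k+1)) = ε ^ a * eval ε T := by rw [hT]; simp
    have h3 : (-1:ℝ)^(b+m) * (ε ^ a * eval ε T) = ε ^ a * ((-1:ℝ)^(b+m) * eval ε T) := by
      ring
    rw [h2, h3]
    exact mul_pos (pow_pos hε.1 a) hgε
  -- near 1 : case 0 < b
  have etaPart : 0 < b →
      ((X - 1:ℝ[X])^(e - (k+1)) ∣ A n e (k+1)) ∧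
      ∀ lb : ℝ, 0 ≤ lb → lb < 1 →
        ∃ η, η ∈ Set.Ioo lb 1 ∧ 0 < (-1:ℝ)^(b-1) * eval η (A n e (k+1)) := by
    intro hbpos
    obtain ⟨b'', hb''⟩ : ∃ b'', b = b'' + 1 := ⟨b - 1, by omega⟩
    set G₁ : ℝ[X] := C c₀ * X ^ a * ∏ i ∈ Finset.range m, (X - C (rr i)) with hG₁
    have hfac1 : A n e k = (X - 1)^b * G₁ := by rw [hfacb, hG₁]; ring
    set H : ℝ[X] := C (n:ℝ) * X * (C (b:ℝ) * G₁ + (X - 1) * derivative G₁)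
        - C (k:ℝ) * ((X - 1) * G₁) with hHdef
    have hH : A n e (k+1) = (X - 1)^b'' * H := by
      rw [hA1, hfac1, hb'', derivative_mul, derivative_pow]
      simp only [derivative_sub, derivative_X, derivative_one, sub_zero, mul_one,
        Nat.add_sub_cancel]
      rw [hHdef, hb'']
      push_cast
      ring
    have hHval : eval 1 H = (n:ℝ) * ((b:ℝ) * (c₀ * ∏ i ∈ Finset.range m, (1 - rr i))) := by
      rw [hHdef]
      simp [hG₁, eval_prod]
    constructor
    · refine ⟨H, ?_⟩
      rw [hH]
      congr 2
      omega
    · intro lb hlb0 hlb1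
      have hH1pos : 0 < eval 1 H := by
        rw [hHval]
        have hbR : (0:ℝ) < b := by exact_mod_cast hbpos
        exact mul_pos hnR (mul_pos hbR (mul_pos hc₀ hprod1rr))
      obtain ⟨η, hη, hηH⟩ := exists_left H.continuous hlb1 hH1pos
      refine ⟨η, hη, ?_⟩
      have h2 : eval η (A n e (k+1)) = (η - 1)^b'' * eval η H := by rw [hH]; simp
      have h3 : (-1:ℝ)^(b-1) * ((η - 1)^b'' * eval η H) = (1 - η)^b'' * eval η H := by
        rw [show b - 1 = b'' by omega,
          show ((1:ℝ) - η)^b'' = (-1:ℝ)^b'' * (η - 1)^b'' by rw [← mul_pow]; congr 1; ring]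
        ring
      rw [h2, h3]
      exact mul_pos (pow_pos (by linarith [hη.2]) b'') hηH
  -- lower bound point for the η picker
  have hlbex : ∃ lb : ℝ, 0 ≤ lb ∧ lb < 1 ∧ (∀ i, i < m → rr i ≤ lb) := by
    rcases Nat.eq_zero_or_pos m with hm0 | hmpos
    · exact ⟨0, le_refl _, by norm_num, fun i hi => by omega⟩
    · refine ⟨rr (m-1), le_of_lt (hIoo (m-1) (by omega)).1, (hIoo (m-1) (by omega)).2, ?_⟩
      intro i hi
      rcases Nat.lt_or_ge i (m-1) with h | h
      · exact le_of_lt (hmono i (m-1) h (by omega))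
      · have : i = m - 1 := by omega
        rw [this]
  -- the four cases
  rcases eq_or_lt_of_le hka with hnak | hnak
  · -- first pair of cases : n*a = k, so X^(a+1) divides
    have hzero : (C (n:ℝ) * C (a:ℝ) - C (k:ℝ)) = 0 := by
      rw [← C_mul, ← C_sub]
      have hcast : ((n:ℝ)) * a - k = 0 := by
        have h1 : ((n * a : ℕ) : ℝ) = (k : ℝ) := by exact_mod_cast congrArg Nat.cast hnak.symm
        push_cast at h1
        linarith
      rw [hcast, C_0]
    have hTX : A n e (k+1) = X^(a+1) * (C (n:ℝ) * derivative G) := by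
      rw [hT, hTdef, hzero, zero_mul, zero_add, pow_succ]
      ring
    have hXdvd : X^(a+1) ∣ A n e (k+1) := ⟨C (n:ℝ) * derivative G, hTX⟩
    rcases Nat.eq_zero_or_pos b with hb0 | hbpos
    · -- case A : n*a = k, b = 0 ; chain is rr itself
      have hm1 : 1 ≤ m := by
        by_contra hm0
        have ha : a = e := by omega
        rw [ha] at hnak
        omega
      obtain ⟨rr', hmono', hIoo', hroots⟩ := chain_package (A n e (k+1)) m (b+m+1) rr
        (fun i hi => hmono i (i+1) (by omega) hi)
        (fun i hi => hIoo i hi)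
        (fun i hi => hsignR i hi)
      apply build n e k hk1 (a+1) (m-1) rr' hmono' hIoo' hroots hXdvd
      · rw [show e - (k+1) = 0 by omega, pow_zero]
        exact one_dvd _
      · omega
      · rw [Nat.mul_succ, ← hnak]; omega
      · rw [Nat.mul_succ, ← hnak]; omega
    · -- case B : n*a = k, 0 < b ; chain is rr followed by η
      obtain ⟨hX1dvd', hetafun⟩ := etaPart hbpos
      obtain ⟨lb, hlb0, hlb1, hlbge⟩ := hlbex
      obtain ⟨η, hη, hηsign⟩ := hetafun lb hlb0 hlb1
      set t : ℕ → ℝ := fun i => if i < m then rr i else η with htdef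
      have ht1 : ∀ i, i < m → t i = rr i := by
        intro i hi; simp only [htdef]; rw [if_pos hi]
      have ht2 : ∀ i, ¬ i < m → t i = η := by
        intro i hi; simp only [htdef]; rw [if_neg hi]
      obtain ⟨rr', hmono', hIoo', hroots⟩ := chain_package (A n e (k+1)) (m+1) (b+m+1) t
        (by
          intro i hi
          by_cases h1 : i + 1 < m
          · rw [ht1 i (by omega), ht1 (i+1) h1]
            exact hmono i (i+1) (by omega) h1
          · rw [ht1 i (by omega), ht2 (i+1) h1]
            exact lt_of_le_of_lt (hlbge i (by omega)) hη.1)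
        (by
          intro i hi
          by_cases h1 : i < m
          · rw [ht1 i h1]; exact hIoo i h1
          · rw [ht2 i h1]
            exact ⟨lt_of_le_of_lt hlb0 hη.1, hη.2⟩)
        (by
          intro i hi
          by_cases h1 : i < m
          · rw [ht1 i h1]; exact hsignR i h1
          · have him : i = m := by omega
            rw [ht2 i h1, him]
            have hc := hηsign
            rwa [neg_one_pow_congr (show (b-1) % 2 = (b+m+1+m) % 2 by omega)] at hc)
      simp only [Nat.add_sub_cancel] at hmono' hIoo' hroots
      apply build n e k hk1 (a+1) m rr' hmono' hIoo' hroots hXdvd hX1dvd'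
      · omega
      · rw [Nat.mul_succ, ← hnak]; omega
      · rw [Nat.mul_succ, ← hnak]; omega
  · -- second pair : k < n*a, so X^a divides and we pick ε near 0
    have hXdvd : X^a ∣ A n e (k+1) := ⟨T, hT⟩
    rcases Nat.eq_zero_or_pos b with hb0 | hbpos
    · -- case C : k < n*a, b = 0 ; chain is ε followed by rr
      have huex : ∃ u : ℝ, 0 < u ∧ u ≤ 1 ∧ (∀ _ : 0 < m, u ≤ rr 0) := by
        rcases Nat.eq_zero_or_pos m with hm0 | hmpos
        · exact ⟨1, by norm_num, le_refl _, fun hm => by omega⟩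
        · exact ⟨rr 0, (hIoo 0 hmpos).1, le_of_lt (hIoo 0 hmpos).2, fun _ => le_refl _⟩
      obtain ⟨u, hu0, hu1, hur⟩ := huex
      obtain ⟨ε, hε, hεsign⟩ := pick_eps u hu0 hnak
      set t : ℕ → ℝ := fun i => if i = 0 then ε else rr (i-1) with htdef
      have ht0 : t 0 = ε := by simp [htdef]
      have ht1 : ∀ i, t (i+1) = rr i := by
        intro i; simp only [htdef]
        rw [if_neg (Nat.succ_ne_zero i)]
        simp
      obtain ⟨rr', hmono', hIoo', hroots⟩ := chain_package (A n e (k+1)) (m+1) (b+m) t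
        (by
          intro i hi
          rcases Nat.eq_zero_or_pos i with h0 | hpos
          · subst h0
            rw [ht0, ht1 0]
            exact lt_of_lt_of_le hε.2 (hur (by omega))
          · obtain ⟨j, rfl⟩ : ∃ j, i = j + 1 := ⟨i - 1, by omega⟩
            rw [ht1 j, ht1 (j+1)]
            exact hmono j (j+1) (by omega) (by omega))
        (by
          intro i hi
          rcases Nat.eq_zero_or_pos i with h0 | hpos
          · subst h0
            rw [ht0]
            exact ⟨hε.1, lt_of_lt_of_le hε.2 hu1⟩
          · obtain ⟨j, rfl⟩ : ∃ j, i = j + 1 := ⟨i - 1, by omega⟩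
            rw [ht1 j]
            exact hIoo j (by omega))
        (by
          intro i hi
          rcases Nat.eq_zero_or_pos i with h0 | hpos
          · subst h0
            rw [ht0]
            simpa using hεsign
          · obtain ⟨j, rfl⟩ : ∃ j, i = j + 1 := ⟨i - 1, by omega⟩
            rw [ht1 j]
            have hc := hsignR j (by omega)
            rwa [neg_one_pow_congr (show (b+m+1+j) % 2 = (b+m+(j+1)) % 2 by omega)] at hc)
      simp only [Nat.add_sub_cancel] at hmono' hIoo' hroots
      apply build n e k hk1 a m rr' hmono' hIoo' hroots hXdvd
      · rw [show e - (k+1) = 0 by omega, pow_zero]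
        exact one_dvd _
      · omega
      · exact hnak
      · exact lt_trans hkan (by omega)
    · -- case D : k < n*a, 0 < b ; chain is ε, rr, η
      obtain ⟨hX1dvd', hetafun⟩ := etaPart hbpos
      obtain ⟨lb, hlb0, hlb1, hlbge⟩ := hlbex
      obtain ⟨η, hη, hηsign⟩ := hetafun lb hlb0 hlb1
      have huex : ∃ u : ℝ, 0 < u ∧ u ≤ η ∧ (∀ _ : 0 < m, u ≤ rr 0) := by
        rcases Nat.eq_zero_or_pos m with hm0 | hmpos
        · exact ⟨η, lt_of_le_of_lt hlb0 hη.1, le_refl _, fun hm => by omega⟩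
        · exact ⟨rr 0, (hIoo 0 hmpos).1,
            le_of_lt (lt_of_le_of_lt (hlbge 0 hmpos) hη.1), fun _ => le_refl _⟩
      obtain ⟨u, hu0, huη, hur⟩ := huex
      obtain ⟨ε, hε, hεsign⟩ := pick_eps u hu0 hnak
      set t : ℕ → ℝ := fun i => if i = 0 then ε else if i < m + 1 then rr (i-1) else η
        with htdef
      have ht0 : t 0 = ε := by simp [htdef]
      have ht1 : ∀ i, i < m → t (i+1) = rr i := by
        intro i hi; simp only [htdef]
        rw [if_neg (Nat.succ_ne_zero i), if_pos (by omega : i + 1 < m + 1)]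
        simp
      have ht2 : t (m+1) = η := by
        simp only [htdef]
        rw [if_neg (Nat.succ_ne_zero m), if_neg (lt_irrefl (m+1))]
      obtain ⟨rr', hmono', hIoo', hroots⟩ := chain_package (A n e (k+1)) (m+2) (b+m) t
        (by
          intro i hi
          rcases Nat.eq_zero_or_pos i with h0 | hpos
          · subst h0
            rcases Nat.eq_zero_or_pos m with hm0 | hmpos
            · rw [ht0, show (0:ℕ)+1 = m+1 by omega, ht2]
              exact lt_of_lt_of_le hε.2 huη
            · rw [ht0, ht1 0 hmpos]
              exact lt_of_lt_of_le hε.2 (hur hmpos)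
          · obtain ⟨j, rfl⟩ : ∃ j, i = j + 1 := ⟨i - 1, by omega⟩
            by_cases h1 : j + 1 < m
            · rw [ht1 j (by omega), ht1 (j+1) h1]
              exact hmono j (j+1) (by omega) h1
            · have hjm : j + 1 = m := by omega
              rw [ht1 j (by omega), show j+1+1 = m+1 by omega, ht2]
              exact lt_of_le_of_lt (hlbge j (by omega)) hη.1)
        (by
          intro i hi
          rcases Nat.eq_zero_or_pos i with h0 | hpos
          · subst h0
            rw [ht0]
            exact ⟨hε.1, lt_of_lt_of_le hε.2 (le_trans huη (le_of_lt hη.2))⟩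
          · obtain ⟨j, rfl⟩ : ∃ j, i = j + 1 := ⟨i - 1, by omega⟩
            by_cases h1 : j < m
            · rw [ht1 j h1]
              exact hIoo j h1
            · rw [show j+1 = m+1 by omega, ht2]
              exact ⟨lt_of_le_of_lt hlb0 hη.1, hη.2⟩)
        (by
          intro i hi
          rcases Nat.eq_zero_or_pos i with h0 | hpos
          · subst h0
            rw [ht0]
            simpa using hεsign
          · obtain ⟨j, rfl⟩ : ∃ j, i = j + 1 := ⟨i - 1, by omega⟩
            by_cases h1 : j < m
            · rw [ht1 j h1]
              have hc := hsignR j (by omega)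
              rwa [neg_one_pow_congr (show (b+m+1+j) % 2 = (b+m+(j+1)) % 2 by omega)] at hc
            · rw [show j+1 = m+1 by omega, ht2]
              have hc := hηsign
              rwa [neg_one_pow_congr (show (b-1) % 2 = (b+m+(m+1)) % 2 by omega)] at hc)
      have hM : m + 2 - 1 = m + 1 := by omega
      rw [hM] at hmono' hIoo' hroots
      apply build n e k hk1 a (m+1) rr' hmono' hIoo' hroots hXdvd hX1dvd'
      · omega
      · exact hnak
      · exact lt_trans hkan (by omega)

lemma inv_all (n e : ℕ) (hn : 0 < n) : ∀ k, k ≤ n * e → Inv n e k := by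
  intro k
  induction k with
  | zero => intro _; exact inv_zero n e hn
  | succ k ih => intro hk; exact inv_step n e k hn hk (ih (by omega))

/-- The key real-analytic fact : multiple complex roots of `A n e k` are `0` or `1`. -/
lemma A_mult_root (n e k : ℕ) (hn : 0 < n) (hk : k ≤ n * e) (u : ℂ)
    (h1 : aeval u (A n e k) = 0) (h2 : aeval u (derivative (A n e k)) = 0) :
    u = 0 ∨ u = 1 := by
  obtain ⟨m, a, rr, hmono, hIoo, _, _, _, hfac⟩ := inv_all n e hn k hk
  have hu : (algebraMap ℝ ℂ) (((n * e).descFactorial k : ℝ)) * u ^ a * (u - 1) ^ (e - k) *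
      ∏ i ∈ Finset.range m, (u - algebraMap ℝ ℂ (rr i)) = 0 := by
    have hcong := congrArg (aeval u) hfac
    rw [h1] at hcong
    have heq : aeval u (C (((n * e).descFactorial k : ℝ)) * X ^ a * (X - 1) ^ (e - k) *
        ∏ i ∈ Finset.range m, (X - C (rr i))) =
        (algebraMap ℝ ℂ) (((n * e).descFactorial k : ℝ)) * u ^ a * (u - 1) ^ (e - k) *
        ∏ i ∈ Finset.range m, (u - algebraMap ℝ ℂ (rr i)) := by
      simp [map_prod]
    rw [heq] at hcong
    exact hcong.symm
  rcases mul_eq_zero.mp hu with h | h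
  · rcases mul_eq_zero.mp h with h' | h'
    · rcases mul_eq_zero.mp h' with h'' | h''
      · exfalso
        have hp := desc_pos (N := n * e) (k := k) hk
        exact (map_ne_zero_iff _ (algebraMap ℝ ℂ).injective).mpr (ne_of_gt hp) h''
      · left
        exact (pow_eq_zero_iff'.mp h'').1
    · right
      have h3 : u - 1 = 0 := (pow_eq_zero_iff'.mp h').1
      linear_combination h3
  · exfalso
    obtain ⟨i, hi, hzero⟩ := Finset.prod_eq_zero_iff.mp h
    have him : i < m := Finset.mem_range.mp hi
    have hu_eq : u = algebraMap ℝ ℂ (rr i) := sub_eq_zero.mp hzero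
    have hder := deriv_at_root him hfac
    have hne : eval (rr i) (derivative (A n e k)) ≠ 0 := by
      rw [hder]
      have h01 := hIoo i him
      apply mul_ne_zero (mul_ne_zero (mul_ne_zero _ _) _) _
      · exact ne_of_gt (desc_pos hk)
      · exact pow_ne_zero _ (ne_of_gt h01.1)
      · refine pow_ne_zero _ ?_
        intro hc
        rw [sub_eq_zero] at hc
        exact absurd hc (ne_of_lt h01.2)
      · apply Finset.prod_ne_zero_iff.mpr
        intro j hj
        rw [Finset.mem_erase, Finset.mem_range] at hj
        rcases lt_trichotomy j i with hlt | heq | hgt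
        · have := hmono j i hlt him; intro hc; linarith
        · exact absurd heq hj.1
        · have := hmono i j hgt hj.2; intro hc; linarith
    apply hne
    rw [hu_eq, aeval_algebraMap_apply_eq_algebraMap_eval] at h2
    exact (map_eq_zero_iff _ (algebraMap ℝ ℂ).injective).mp h2

/-- expansion of `z^k * (d/dz)^k (z^n - c)^e` at any point. -/
lemma eval_iter_deriv (n e k : ℕ) (c z : ℂ) :
    z ^ k * eval z (derivative^[k] ((X ^ n - C c) ^ e)) =
      ∑ j ∈ Finset.range (e + 1),
        (e.choose j : ℂ) * (-c) ^ (e - j) * ((n * j).descFactorial k : ℂ) * z ^ (n * j) := by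
  have hexp : ((X : ℂ[X]) ^ n - C c) ^ e = ∑ j ∈ Finset.range (e + 1),
      C ((e.choose j : ℂ) * (-c) ^ (e - j)) * X ^ (n * j) := by
    rw [sub_eq_add_neg, add_pow]
    apply Finset.sum_congr rfl
    intro j _
    rw [← pow_mul, show ((-C c : ℂ[X])) ^ (e - j) = C ((-c) ^ (e - j)) by
        rw [← C_neg, ← C_pow],
      show ((e.choose j : ℂ[X])) = C ((e.choose j : ℂ)) by simp, C_mul]
    ring
  rw [hexp, Polynomial.iterate_derivative_sum, eval_finset_sum, Finset.mul_sum]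
  apply Finset.sum_congr rfl
  intro j _
  rw [Polynomial.iterate_derivative_C_mul, Polynomial.iterate_derivative_X_pow_eq_natCast_mul]
  simp only [eval_mul, eval_C, eval_natCast, eval_pow, eval_X]
  rcases le_or_gt k (n * j) with h | h
  · have hzz : z ^ (n * j - k) * z ^ k = z ^ (n * j) := pow_sub_mul_pow z h
    linear_combination ((e.choose j : ℂ) * (-c) ^ (e - j) * ((n * j).descFactorial k : ℂ)) * hzz
  · rw [Nat.descFactorial_eq_zero_iff_lt.mpr h]
    push_cast
    ring
lemma deriv_root_to_A (n e k : ℕ) (c z : ℂ) (hc : c ≠ 0) (hz : z ≠ 0)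
    (h : eval z (derivative^[k] ((X ^ n - C c) ^ e)) = 0) :
    aeval (z ^ n / c) (A n e k) = 0 := by
  have h1 := eval_iter_deriv n e k c z
  rw [h, mul_zero] at h1
  have h2 : (c : ℂ) ^ e * aeval (z ^ n / c) (A n e k) =
      ∑ j ∈ Finset.range (e + 1),
        (e.choose j : ℂ) * (-c) ^ (e - j) * ((n * j).descFactorial k : ℂ) * z ^ (n * j) := by
    rw [A, map_sum, Finset.mul_sum]
    apply Finset.sum_congr rfl
    intro j hj
    have hje : j ≤ e := by rw [Finset.mem_range] at hj; omega
    rw [map_mul, map_pow, aeval_X, aeval_C]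
    have hcoef : (algebraMap ℝ ℂ) ((-1:ℝ) ^ (e - j) * (e.choose j) * ((n * j).descFactorial k)) =
        (-1 : ℂ) ^ (e - j) * (e.choose j : ℂ) * ((n * j).descFactorial k : ℂ) := by
      push_cast
      ring
    rw [hcoef]
    have hsplit : (c:ℂ) ^ e = c ^ (e - j) * c ^ j := by rw [← pow_add]; congr 1; omega
    have hdiv : (z ^ n / c) ^ j = z ^ (n * j) / c ^ j := by rw [div_pow, ← pow_mul]
    rw [hsplit, hdiv, neg_pow]
    have hcj : (c:ℂ) ^ j ≠ 0 := pow_ne_zero _ hc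
    field_simp
    ring
  rw [← h1] at h2
  exact (mul_eq_zero.mp h2).resolve_left (pow_ne_zero _ hc)

end Stmt7Aux

open Stmt7Aux in
/-- For `F(z) = (z^n − c)^e` with `c ≠ 0`, every nonzero
derivative `F^{(k)}` has no multiple complex roots other than possibly `0`
and the `n`-th roots of `c`. -/
theorem stmt7 (n e : ℕ) (hn : 0 < n) (he : 0 < e) (c : ℂ) (hc : c ≠ 0)
    (F : Polynomial ℂ) (hF : F = (X ^ n - C c) ^ e)
    (k : ℕ) (hFk : derivative^[k] F ≠ 0)
    (z : ℂ) (hmult : 2 ≤ (derivative^[k] F).rootMultiplicity z) :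
    z = 0 ∨ z ^ n = c := by
  by_cases hz : z = 0
  · exact Or.inl hz
  right
  subst hF
  have hd2 : (X - Polynomial.C z) ^ 2 ∣ derivative^[k] ((X ^ n - C c) ^ e) :=
    dvd_trans (pow_dvd_pow _ hmult) (Polynomial.pow_rootMultiplicity_dvd _ z)
  obtain ⟨q, hq⟩ := hd2
  have hev1 : eval z (derivative^[k] ((X ^ n - C c) ^ e)) = 0 := by rw [hq]; simp
  have hev2 : eval z (derivative^[k+1] ((X ^ n - C c) ^ e)) = 0 := by
    rw [Function.iterate_succ_apply', hq, derivative_mul, derivative_pow]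
    simp
  have hmonic : ((X:ℂ[X]) ^ n - C c).Monic := monic_X_pow_sub_C c (by omega : n ≠ 0)
  have hdegF : (((X:ℂ[X]) ^ n - C c) ^ e).natDegree = e * n := by
    rw [hmonic.natDegree_pow, natDegree_X_pow_sub_C]
  have hk2 : k + 2 ≤ n * e := by
    have hle := Polynomial.natDegree_iterate_derivative (((X:ℂ[X]) ^ n - C c) ^ e) k
    rw [hdegF] at hle
    have h2le : 2 ≤ (derivative^[k] ((X ^ n - C c) ^ e)).natDegree := by
      have hd := Polynomial.natDegree_le_of_dvd ⟨q, hq⟩ hFk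
      rwa [natDegree_pow, natDegree_X_sub_C, mul_one] at hd
    have hcomm : e * n = n * e := Nat.mul_comm e n
    omega
  have hu1 := deriv_root_to_A n e k c z hc hz hev1
  have hu2 := deriv_root_to_A n e (k+1) c z hc hz hev2
  have hu0 : (z ^ n / c) ≠ 0 := div_ne_zero (pow_ne_zero _ hz) hc
  have hdA : aeval (z ^ n / c) (derivative (A n e k)) = 0 := by
    have hsucc := congrArg (aeval (z ^ n / c)) (A_succ n e k)
    rw [hu2] at hsucc
    simp only [map_sub, map_mul, aeval_C, aeval_X, map_natCast] at hsucc
    rw [hu1, mul_zero, sub_zero] at hsucc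
    have hnu : ((n : ℂ) * (z ^ n / c)) ≠ 0 :=
      mul_ne_zero (Nat.cast_ne_zero.mpr (by omega)) hu0
    rcases mul_eq_zero.mp hsucc.symm with hcon | hgood
    · exact absurd hcon hnu
    · exact hgood
  rcases A_mult_root n e k hn (by omega) (z ^ n / c) hu1 hdA with h0 | h1
  · exact absurd h0 hu0
  · field_simp at h1
    exact h1
end

section
/- Let f ∈ ℂ[[x,y]] be irreducible of characteristic (b₀,…,b_h) with e_i = gcd(b₀,…,b_i). For each characteristic exponent b_i/b₀, the set T_i(f) of pseudo-balls of height b_i/b₀ meeting Zer f consists of exactly e₀/e_{i−1} pairwise disjoint pseudo-balls, and each B ∈ T_i(f) contains exactly e_{i−1} Newton–Puiseux roots of f; moreover F_B(z) = (z^{e_{i−1}/e_i} − c_B)^{e_i} for some c_B ≠ 0. -/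
attribute [local instance] Classical.propDecidable

open Polynomial

def pball (β : PSer) (r : ℚ) : Set PSer := {ψ | contGe β ψ r}

noncomputable def starAct (n : ℕ) (ε : ℂ) (φ : PSer) : PSer :=
  fun q => ε ^ (q * n).num.toNat * φ q

def orbit (n : ℕ) (α : PSer) : Set PSer :=
  {γ | ∃ ε : ℂ, ε ^ n = 1 ∧ γ = starAct n ε α}

/-- `F_B(z)` for the pseudo-ball `B = pball β r`:
the product of `z − lc_B γ` over the roots `γ = ε * α` lying in `B`. -/
noncomputable def FB (n : ℕ) (α β : PSer) (r : ℚ) : Polynomial ℂ :=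
  ∏ ε ∈ (Polynomial.nthRootsFinset n (1 : ℂ)).filter (fun ε => starAct n ε α ∈ pball β r),
    (X - C ((starAct n ε α) r))

open Finset

theorem Finset.card_image_mul_of_card_fiber {ι κ : Type*} [DecidableEq κ] {s : Finset ι}
    {f : ι → κ} {m : ℕ} (hf : ∀ a ∈ s, #{x ∈ s | f x = f a} = m) :
    #(s.image f) * m = #s := by
  rw [card_eq_sum_card_image f s, sum_const_nat]
  intro y hy
  obtain ⟨a, ha, rfl⟩ := mem_image.1 hy
  exact hf a ha

theorem pow_gcd_eq_pow_gcd {G₀ : Type*} [CommGroupWithZero G₀] {x y : G₀} {m l : ℕ}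
    (hy : y ≠ 0) (hm : x ^ m = y ^ m) (hl : x ^ l = y ^ l) :
    x ^ m.gcd l = y ^ m.gcd l := by
  rw [← div_eq_one_iff_eq (pow_ne_zero _ hy), ← div_pow] at hm hl ⊢
  exact pow_gcd_eq_one.2 ⟨hm, hl⟩

theorem filter_pow_eq_pow_nthRootsFinset {K : Type*} [Field K] {N k : ℕ} (hN : 0 < N) {y : K}
    (hy : y ∈ nthRootsFinset N (1 : K)) :
    {x ∈ nthRootsFinset N (1 : K) | x ^ k = y ^ k} =
      (nthRootsFinset (N.gcd k) (1 : K)).image (y * ·) := by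
  have hy0 : y ≠ 0 := ne_zero_of_mem_nthRootsFinset one_ne_zero hy
  rw [mem_nthRootsFinset hN] at hy
  ext x
  simp only [mem_filter, mem_image, mem_nthRootsFinset hN,
    mem_nthRootsFinset (Nat.gcd_pos_of_pos_left k hN)]
  constructor
  · rintro ⟨hxN, hxk⟩
    refine ⟨x / y, ?_, mul_div_cancel₀ x hy0⟩
    rw [div_pow, div_eq_one_iff_eq (pow_ne_zero _ hy0)]
    exact pow_gcd_eq_pow_gcd hy0 (hxN.trans hy.symm) hxk
  · rintro ⟨w, hw, rfl⟩
    obtain ⟨hwN, hwk⟩ := pow_gcd_eq_one.1 hw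
    simp only [mul_pow, hy, hwN, hwk, mul_one, and_self]

theorem Complex.card_nthRootsFinset_one {N : ℕ} (hN : 0 < N) :
    #(nthRootsFinset N (1 : ℂ)) = N :=
  (Complex.isPrimitiveRoot_exp N hN.ne').card_nthRootsFinset

theorem card_filter_pow_eq_pow_nthRootsFinset {N k : ℕ} (hN : 0 < N) {y : ℂ}
    (hy : y ∈ nthRootsFinset N (1 : ℂ)) :
    #{x ∈ nthRootsFinset N (1 : ℂ) | x ^ k = y ^ k} = N.gcd k := by
  rw [filter_pow_eq_pow_nthRootsFinset hN hy,
    card_image_of_injective _ (mul_right_injective₀ (ne_zero_of_mem_nthRootsFinset one_ne_zero hy)),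
    Complex.card_nthRootsFinset_one (Nat.gcd_pos_of_pos_left k hN)]

theorem image_pow_nthRootsFinset {N k : ℕ} (hN : 0 < N) :
    (nthRootsFinset N (1 : ℂ)).image (· ^ k) = nthRootsFinset (N / N.gcd k) (1 : ℂ) := by
  set g := N.gcd k
  have hg : 0 < g := Nat.gcd_pos_of_pos_left k hN
  have hM : 0 < N / g := Nat.div_pos (Nat.gcd_le_left k hN) hg
  have hcard : #((nthRootsFinset N (1 : ℂ)).image (· ^ k)) * g = N := by
    rw [card_image_mul_of_card_fiber fun y hy => card_filter_pow_eq_pow_nthRootsFinset hN hy,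
      Complex.card_nthRootsFinset_one hN]
  refine eq_of_subset_of_card_le ?_ ?_
  · intro x hx
    obtain ⟨y, hy, rfl⟩ := mem_image.1 hx
    obtain ⟨k', hk'⟩ := Nat.gcd_dvd_right N k
    have hexp : k * (N / g) = N * k' := by
      rw [hk', mul_comm g, mul_assoc, Nat.mul_div_cancel' (Nat.gcd_dvd_left N k), mul_comm]
    rw [mem_nthRootsFinset hN] at hy
    rw [mem_nthRootsFinset hM, ← pow_mul, hexp, pow_mul, hy, one_pow]
  · rw [Complex.card_nthRootsFinset_one hM]
    exact Nat.div_le_of_le_mul (by rw [mul_comm]; exact hcard.ge)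

theorem prod_X_sub_C_mul_nthRootsFinset {m : ℕ} (hm : 0 < m) (c : ℂ) :
    ∏ η ∈ nthRootsFinset m (1 : ℂ), (X - C (c * η)) = X ^ m - C (c ^ m) := by
  obtain ⟨ζ, hζ⟩ : ∃ ζ : ℂ, IsPrimitiveRoot ζ m := ⟨_, Complex.isPrimitiveRoot_exp m hm.ne'⟩
  have : NeZero m := ⟨hm.ne'⟩
  rw [X_pow_sub_C_eq_prod hζ hm rfl]
  refine (prod_nbij (ζ ^ ·) (fun j _ => ?_) ?_ ?_ fun j _ => by rw [mul_comm]).symm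
  · rw [mem_nthRootsFinset hm, ← pow_mul, mul_comm, pow_mul, hζ.pow_eq_one, one_pow]
  · exact fun i hi j hj => hζ.pow_inj (mem_range.1 hi) (mem_range.1 hj)
  · intro η hη
    obtain ⟨j, hj, rfl⟩ := hζ.eq_pow_of_pow_eq_one ((mem_nthRootsFinset hm 1).1 hη)
    exact ⟨j, mem_range.2 hj, rfl⟩

theorem prod_X_sub_C_mul_pow_nthRootsFinset {E : ℕ} (hE : 0 < E) (c : ℂ) (k : ℕ) :
    ∏ w ∈ nthRootsFinset E (1 : ℂ), (X - C (c * w ^ k)) =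
      (X ^ (E / E.gcd k) - C (c ^ (E / E.gcd k))) ^ E.gcd k := by
  have hM : 0 < E / E.gcd k :=
    Nat.div_pos (Nat.gcd_le_left k hE) (Nat.gcd_pos_of_pos_left k hE)
  have hfiber : ∀ η ∈ (nthRootsFinset E (1 : ℂ)).image (· ^ k),
      #{w ∈ nthRootsFinset E (1 : ℂ) | w ^ k = η} = E.gcd k := by
    intro η hη
    obtain ⟨w, hw, rfl⟩ := mem_image.1 hη
    exact card_filter_pow_eq_pow_nthRootsFinset hE hw
  rw [prod_comp (fun η => X - C (c * η)) (· ^ k), prod_congr rfl fun η hη => by rw [hfiber η hη],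
    prod_pow, image_pow_nthRootsFinset hE, prod_X_sub_C_mul_nthRootsFinset hM]

theorem mem_pball_self (β : PSer) (r : ℚ) : β ∈ pball β r := fun _ _ => rfl

theorem pball_eq_of_mem {β ψ : PSer} {r : ℚ} (h : ψ ∈ pball β r) : pball ψ r = pball β r := by
  ext χ
  exact ⟨fun hχ q hq => (h q hq).trans (hχ q hq), fun hχ q hq => (h q hq).symm.trans (hχ q hq)⟩

theorem pball_eq_pball_iff {β ψ : PSer} {r : ℚ} : pball ψ r = pball β r ↔ ψ ∈ pball β r :=
  ⟨fun h => h ▸ mem_pball_self ψ r, pball_eq_of_mem⟩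

theorem disjoint_pball_of_ne {β β' : PSer} {r : ℚ} (h : pball β r ≠ pball β' r) :
    Disjoint (pball β r) (pball β' r) :=
  Set.disjoint_left.2 fun _ h₁ h₂ => h ((pball_eq_of_mem h₁).symm.trans (pball_eq_of_mem h₂))

theorem starAct_natCast_div {n : ℕ} (hn : n ≠ 0) (ε : ℂ) (φ : PSer) (j : ℕ) :
    starAct n ε φ ((j : ℚ) / n) = ε ^ j * φ ((j : ℚ) / n) := by
  have hn' : (n : ℚ) ≠ 0 := Nat.cast_ne_zero.2 hn
  change ε ^ ((j : ℚ) / n * n).num.toNat * _ = _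
  rw [div_mul_cancel₀ _ hn', Rat.num_natCast, Int.toNat_natCast]

theorem pball_inter_orbit {n : ℕ} (hn : 0 < n) (α : PSer) (B : Set PSer) :
    B ∩ orbit n α =
      ({ε ∈ nthRootsFinset n (1 : ℂ) | starAct n ε α ∈ B}.image (starAct n · α) : Set PSer) := by
  ext γ
  simp only [orbit, Set.mem_inter_iff, Set.mem_ofPred_eq, coe_image, coe_filter, Set.mem_image,
    mem_nthRootsFinset hn]
  constructor
  · rintro ⟨hγ, ε, hε, rfl⟩
    exact ⟨ε, ⟨hε, hγ⟩, rfl⟩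
  · rintro ⟨ε, ⟨hε, hγ⟩, rfl⟩
    exact ⟨hγ, ε, hε, rfl⟩

theorem setOf_pball_inter_orbit_nonempty {n : ℕ} (hn : 0 < n) (α : PSer) (r : ℚ) :
    {B : Set PSer | (∃ β : PSer, B = pball β r) ∧ (B ∩ orbit n α).Nonempty} =
      (fun ε => pball (starAct n ε α) r) '' (nthRootsFinset n (1 : ℂ) : Set ℂ) := by
  ext B
  simp only [Set.mem_ofPred_eq, Set.mem_image, mem_coe, mem_nthRootsFinset hn]
  constructor
  · rintro ⟨⟨β, rfl⟩, _, hγ, ε, hε, rfl⟩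
    exact ⟨ε, hε, pball_eq_of_mem hγ⟩
  · rintro ⟨ε, hε, rfl⟩
    exact ⟨⟨_, rfl⟩, _, mem_pball_self _ r, ε, hε, rfl⟩

structure IsCharacteristic (n : ℕ) (α : PSer) (b e : ℕ → ℕ) (h : ℕ) : Prop where
  e_zero : e 0 = n
  e_succ : ∀ k, e (k + 1) = (e k).gcd (b (k + 1))
  isLeast_b : ∀ k < h, IsLeast {j : ℕ | ¬ e k ∣ j ∧ α ((j : ℚ) / n) ≠ 0} (b (k + 1))
  e_eq_one : e h = 1

namespace IsCharacteristic

variable {n h : ℕ} {α : PSer} {b e : ℕ → ℕ}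

theorem e_dvd (hχ : IsCharacteristic n α b e h) (k : ℕ) : e k ∣ n := by
  induction k with
  | zero => rw [hχ.e_zero]
  | succ k ih => exact hχ.e_succ k ▸ (Nat.gcd_dvd_left _ _).trans ih

theorem e_pos (hχ : IsCharacteristic n α b e h) (hn : 0 < n) (k : ℕ) : 0 < e k :=
  Nat.pos_of_dvd_of_pos (hχ.e_dvd k) hn

theorem coeff_b_ne_zero (hχ : IsCharacteristic n α b e h) {j : ℕ} (hj : j ∈ Set.Icc 1 h) :
    α ((b j : ℚ) / n) ≠ 0 := by
  obtain ⟨k, rfl⟩ := Nat.exists_eq_add_of_le' hj.1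
  exact (hχ.isLeast_b k hj.2).1.2

theorem dvd_of_lt_b (hχ : IsCharacteristic n α b e h) {k j : ℕ} (hk : k < h)
    (hj : j < b (k + 1)) (hα : α ((j : ℚ) / n) ≠ 0) : e k ∣ j := by
  by_contra hndvd
  exact hj.not_ge ((hχ.isLeast_b k hk).2 ⟨hndvd, hα⟩)

theorem b_strictMonoOn (hχ : IsCharacteristic n α b e h) : StrictMonoOn b (Set.Icc 1 h) := by
  refine strictMonoOn_of_lt_succ Set.ordConnected_Icc fun a _ ha ha' => ?_
  obtain ⟨k, rfl⟩ := Nat.exists_eq_add_of_le' ha.1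
  simp only [Order.succ_eq_add_one, Set.mem_Icc] at ha' ⊢
  obtain ⟨hndvd, hα⟩ := (hχ.isLeast_b (k + 1) (by omega)).1
  have hdvd : e (k + 1) ∣ b (k + 1) := hχ.e_succ k ▸ Nat.gcd_dvd_right _ _
  -- `b (k + 2)` is not a multiple of `e (k + 1)`, hence not of `e k`
  have hle : b (k + 1) ≤ b (k + 2) := (hχ.isLeast_b k (by omega)).2
    ⟨fun h' => hndvd ((hχ.e_succ k ▸ Nat.gcd_dvd_left _ _).trans h'), hα⟩
  exact hle.lt_of_ne fun heq => hndvd (heq ▸ hdvd)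

theorem pow_e_eq_of_pow_b_eq (hχ : IsCharacteristic n α b e h) {x y : ℂ} (hy : y ≠ 0)
    (hn : x ^ n = y ^ n) :
    ∀ k, (∀ j ∈ Set.Icc 1 k, x ^ b j = y ^ b j) → x ^ e k = y ^ e k
  | 0, _ => hχ.e_zero ▸ hn
  | k + 1, hb => by
    rw [hχ.e_succ k]
    exact pow_gcd_eq_pow_gcd hy
      (pow_e_eq_of_pow_b_eq hχ hy hn k fun j hj => hb j ⟨hj.1, hj.2.trans k.le_succ⟩)
      (hb (k + 1) ⟨k.succ_pos, le_rfl⟩)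

theorem starAct_mem_pball_iff (hχ : IsCharacteristic n α b e h) (hn : 0 < n) (hden : hasDen n α)
    {k : ℕ} (hk : k < h) {x y : ℂ} (hx : x ∈ nthRootsFinset n (1 : ℂ))
    (hy : y ∈ nthRootsFinset n (1 : ℂ)) :
    starAct n x α ∈ pball (starAct n y α) ((b (k + 1) : ℚ) / n) ↔ x ^ e k = y ^ e k := by
  have hnQ : (0 : ℚ) < n := Nat.cast_pos.2 hn
  constructor
  · intro hxy
    refine hχ.pow_e_eq_of_pow_b_eq (ne_zero_of_mem_nthRootsFinset one_ne_zero hy)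
      (((mem_nthRootsFinset hn 1).1 hx).trans ((mem_nthRootsFinset hn 1).1 hy).symm) k
      fun j hj => ?_
    have hjh : j ∈ Set.Icc 1 h := ⟨hj.1, hj.2.trans hk.le⟩
    have hlt : b j < b (k + 1) :=
      hχ.b_strictMonoOn hjh ⟨k.succ_pos, hk⟩ (Nat.lt_succ_of_le hj.2)
    have hcoeff := hxy _ ((div_lt_div_iff_of_pos_right hnQ).2 (Nat.cast_lt.2 hlt))
    rw [starAct_natCast_div hn.ne', starAct_natCast_div hn.ne'] at hcoeff
    exact (mul_right_cancel₀ (hχ.coeff_b_ne_zero hjh) hcoeff).symm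
  · intro hxy q hq
    by_cases hα : α q = 0
    · simp [starAct, hα]
    obtain ⟨j, rfl⟩ := hden q hα
    have hj : j < b (k + 1) := Nat.cast_lt.1 ((div_lt_div_iff_of_pos_right hnQ).1 hq)
    obtain ⟨c, rfl⟩ := hχ.dvd_of_lt_b hk hj hα
    rw [starAct_natCast_div hn.ne', starAct_natCast_div hn.ne', pow_mul, pow_mul, hxy]

theorem starAct_injOn (hχ : IsCharacteristic n α b e h) (hn : 0 < n) :
    Set.InjOn (starAct n · α) (nthRootsFinset n (1 : ℂ)) := by
  intro x hx y hy hxy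
  have hpow : x ^ e h = y ^ e h := hχ.pow_e_eq_of_pow_b_eq
    (ne_zero_of_mem_nthRootsFinset one_ne_zero hy)
    (((mem_nthRootsFinset hn 1).1 hx).trans ((mem_nthRootsFinset hn 1).1 hy).symm) h
    fun j hj => by
      have hcoeff := congrFun hxy ((b j : ℚ) / n)
      simp only [starAct_natCast_div hn.ne'] at hcoeff
      exact mul_right_cancel₀ (hχ.coeff_b_ne_zero hj) hcoeff
  rwa [hχ.e_eq_one, pow_one, pow_one] at hpow

theorem filter_starAct_mem_pball (hχ : IsCharacteristic n α b e h) (hn : 0 < n)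
    (hden : hasDen n α) {k : ℕ} (hk : k < h) {y : ℂ} (hy : y ∈ nthRootsFinset n (1 : ℂ)) :
    {x ∈ nthRootsFinset n (1 : ℂ) | starAct n x α ∈ pball (starAct n y α) ((b (k + 1) : ℚ) / n)}
      = (nthRootsFinset (e k) (1 : ℂ)).image (y * ·) := by
  rw [filter_congr fun x hx => hχ.starAct_mem_pball_iff hn hden hk hx hy,
    filter_pow_eq_pow_nthRootsFinset hn hy, Nat.gcd_eq_right (hχ.e_dvd k)]

theorem card_filter_starAct_mem_pball (hχ : IsCharacteristic n α b e h) (hn : 0 < n)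
    (hden : hasDen n α) {k : ℕ} (hk : k < h) {y : ℂ} (hy : y ∈ nthRootsFinset n (1 : ℂ)) :
    #{x ∈ nthRootsFinset n (1 : ℂ) |
        starAct n x α ∈ pball (starAct n y α) ((b (k + 1) : ℚ) / n)} = e k := by
  rw [filter_congr fun x hx => hχ.starAct_mem_pball_iff hn hden hk hx hy,
    card_filter_pow_eq_pow_nthRootsFinset hn hy, Nat.gcd_eq_right (hχ.e_dvd k)]

theorem FB_eq_X_pow_sub_C_pow (hχ : IsCharacteristic n α b e h) (hn : 0 < n)
    (hden : hasDen n α) {k : ℕ} (hk : k < h) {β : PSer} {y : ℂ} (hy : y ∈ nthRootsFinset n (1 : ℂ))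
    (hyβ : starAct n y α ∈ pball β ((b (k + 1) : ℚ) / n)) :
    FB n α β ((b (k + 1) : ℚ) / n) =
      (X ^ (e k / e (k + 1)) - C ((y ^ b (k + 1) * α ((b (k + 1) : ℚ) / n)) ^ (e k / e (k + 1))))
        ^ e (k + 1) := by
  have hyne : y ≠ 0 := ne_zero_of_mem_nthRootsFinset one_ne_zero hy
  have hlc : ∀ w, starAct n (y * w) α ((b (k + 1) : ℚ) / n) =
      y ^ b (k + 1) * α ((b (k + 1) : ℚ) / n) * w ^ b (k + 1) := fun w => by
    rw [starAct_natCast_div hn.ne', mul_pow, mul_right_comm]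
  rw [FB, ← pball_eq_of_mem hyβ, hχ.filter_starAct_mem_pball hn hden hk hy,
    prod_image fun _ _ _ _ hw => mul_left_cancel₀ hyne hw]
  simp only [hlc]
  rw [prod_X_sub_C_mul_pow_nthRootsFinset (hχ.e_pos hn k), ← hχ.e_succ k]

end IsCharacteristic

theorem stmt12_general (n : ℕ) (α : PSer) (hα : hasIndex n α)
    (b e : ℕ → ℕ) (hb0 : b 0 = n) (he0 : e 0 = n)
    (hbmin : ∀ k : ℕ, e k ≠ 1 →
      IsLeast {i : ℕ | ¬ (e k ∣ i) ∧ α ((i : ℚ) / n) ≠ 0} (b (k + 1)))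
    (hgcd : ∀ k : ℕ, e (k + 1) = Nat.gcd (e k) (b (k + 1)))
    (h : ℕ) (hh : e h = 1) (hlt : ∀ k : ℕ, k < h → e k ≠ 1)
    (Zf : Set PSer) (hZf : Zf = orbit n α)
    (i : ℕ) (hi1 : 1 ≤ i) (hih : i ≤ h)
    (r : ℚ) (hr : r = (b i : ℚ) / (b 0 : ℚ))
    (T : Set (Set PSer))
    (hT : T = {B : Set PSer | (∃ β : PSer, B = pball β r) ∧ (B ∩ Zf).Nonempty}) :
    T.Finite ∧ T.ncard = e 0 / e (i - 1) ∧
    (∀ B ∈ T, ∀ B' ∈ T, B ≠ B' → Disjoint B B') ∧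
    (∀ B ∈ T, (B ∩ Zf).ncard = e (i - 1)) ∧
    (∀ β : PSer, pball β r ∈ T → ∃ c : ℂ, c ≠ 0 ∧
      FB n α β r = (X ^ (e (i - 1) / e i) - C c) ^ (e i)) := by
  obtain ⟨hn, hden, -⟩ := hα
  have hχ : IsCharacteristic n α b e h := ⟨he0, hgcd, fun k hk => hbmin k (hlt k hk), hh⟩
  obtain ⟨k, rfl⟩ : ∃ k, i = k + 1 := ⟨i - 1, by omega⟩
  have hk : k < h := hih
  subst hZf hT hr
  rw [add_tsub_cancel_right, hb0, setOf_pball_inter_orbit_nonempty hn]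
  refine ⟨(finite_toSet _).image _, ?_, ?_, ?_, ?_⟩
  · rw [← coe_image, Set.ncard_coe_finset, he0]
    refine (Nat.div_eq_of_eq_mul_left (hχ.e_pos hn k) ?_).symm
    rw [card_image_mul_of_card_fiber fun y hy => ?_, Complex.card_nthRootsFinset_one hn]
    simp only [pball_eq_pball_iff]
    exact hχ.card_filter_starAct_mem_pball hn hden hk hy
  · rintro _ ⟨x, -, rfl⟩ _ ⟨y, -, rfl⟩ hne
    exact disjoint_pball_of_ne hne
  · rintro _ ⟨y, hy, rfl⟩
    rw [pball_inter_orbit hn, Set.ncard_coe_finset,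
      card_image_of_injOn ((hχ.starAct_injOn hn).mono (filter_subset _ _)),
      hχ.card_filter_starAct_mem_pball hn hden hk hy]
  · rintro β ⟨y, hy, hyβ⟩
    have hyne : y ≠ 0 := ne_zero_of_mem_nthRootsFinset one_ne_zero hy
    exact ⟨_, pow_ne_zero _ (mul_ne_zero (pow_ne_zero _ hyne)
        (hχ.coeff_b_ne_zero ⟨k.succ_pos, hk⟩)),
      hχ.FB_eq_X_pow_sub_C_pow hn hden hk hy (hyβ ▸ mem_pball_self _ _)⟩

theorem stmt12 (n : ℕ) (α : PSer) (hα : hasIndex n α) (hpos : posOrder α)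
    (b e : ℕ → ℕ) (hb0 : b 0 = n) (he0 : e 0 = n)
    (hbmin : ∀ k : ℕ, e k ≠ 1 →
      IsLeast {i : ℕ | ¬ (e k ∣ i) ∧ α ((i : ℚ) / n) ≠ 0} (b (k + 1)))
    (hgcd : ∀ k : ℕ, e (k + 1) = Nat.gcd (e k) (b (k + 1)))
    (h : ℕ) (hh : e h = 1) (hlt : ∀ k : ℕ, k < h → e k ≠ 1)
    (Zf : Set PSer) (hZf : Zf = orbit n α)
    (i : ℕ) (hi1 : 1 ≤ i) (hih : i ≤ h)
    (r : ℚ) (hr : r = (b i : ℚ) / (b 0 : ℚ))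
    (T : Set (Set PSer))
    (hT : T = {B : Set PSer | (∃ β : PSer, B = pball β r) ∧ (B ∩ Zf).Nonempty}) :
    T.Finite ∧ T.ncard = e 0 / e (i - 1) ∧
    (∀ B ∈ T, ∀ B' ∈ T, B ≠ B' → Disjoint B B') ∧
    (∀ B ∈ T, (B ∩ Zf).ncard = e (i - 1)) ∧
    (∀ β : PSer, pball β r ∈ T → ∃ c : ℂ, c ≠ 0 ∧
      FB n α β r = (X ^ (e (i - 1) / e i) - C c) ^ (e i)) :=
  stmt12_general n α hα b e hb0 he0 hbmin hgcd h hh hlt Zf hZf i hi1 hih r hr T hT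
end
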